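/- arXiv:2204.12634 — 7 statements merged into one kernel-verified Lean document; each statement's English description precedes it below -/
import Mathlib

section
/- Fix Θ_* ∈ ℝ^{m×q}, μ > 0, and 0 < γ < 2. Let (φ_k)_{k≥0} be any sequence in ℝ^q and define N_k = max{μ, ‖φ_k‖²}, ε_{k+1} = (Θ̂_k − Θ_*)φ_k, and Θ̂_{k+1} = Θ̂_k − (γ/N_k) ε_{k+1} φ_k^⊤ from an arbitrary initial estimate Θ̂_0. Then Σ_{k=0}^∞ ‖ε_{k+1}‖²/N_k ≤ ‖Θ̂_0 − Θ_*‖_F² / (γ(2 − γ)); in particular lim_{k→∞} ‖ε_{k+1}‖²/N_k = 0. -/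
open scoped BigOperators

/-- along the normalized gradient-descent adaptive law, the
    normalized squared prediction errors are summable with
    Σ ‖ε_{k+1}‖²/N_k ≤ ‖Θ̂₀ − Θ_*‖_F²/(γ(2−γ)); in particular they tend to 0. -/
theorem gd_prediction_error_summable {m q : ℕ}
    (Θstar : Matrix (Fin m) (Fin q) ℝ) (μ γ : ℝ)
    (hμ : 0 < μ) (hγ0 : 0 < γ) (hγ2 : γ < 2)
    (φ : ℕ → Fin q → ℝ) (Θhat : ℕ → Matrix (Fin m) (Fin q) ℝ)
    (N : ℕ → ℝ) (hN : ∀ k, N k = max μ (∑ j, φ k j ^ 2))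
    (ε : ℕ → Fin m → ℝ) (hε : ∀ k, ε (k + 1) = (Θhat k - Θstar).mulVec (φ k))
    (hupd : ∀ k, Θhat (k + 1)
      = Θhat k - (γ / N k) • Matrix.vecMulVec (ε (k + 1)) (φ k)) :
    Summable (fun k => (∑ i, ε (k + 1) i ^ 2) / N k) ∧
      (∑' k, (∑ i, ε (k + 1) i ^ 2) / N k)
        ≤ (∑ i, ∑ j, (Θhat 0 - Θstar) i j ^ 2) / (γ * (2 - γ)) ∧
      Filter.Tendsto (fun k => (∑ i, ε (k + 1) i ^ 2) / N k)
        Filter.atTop (nhds 0) := by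
  set V : ℕ → ℝ := fun k => ∑ i, ∑ j, (Θhat k - Θstar) i j ^ 2 with hV
  set f : ℕ → ℝ := fun k => (∑ i, ε (k + 1) i ^ 2) / N k with hf
  have hNpos : ∀ k, 0 < N k := fun k => by
    rw [hN k]; exact lt_of_lt_of_le hμ (le_max_left _ _)
  have hPN : ∀ k, (∑ j, φ k j ^ 2) ≤ N k := fun k => by
    rw [hN k]; exact le_max_right _ _
  have hE : ∀ k, 0 ≤ ∑ i, ε (k + 1) i ^ 2 := fun k =>
    Finset.sum_nonneg fun i _ => sq_nonneg _
  have hf0 : ∀ k, 0 ≤ f k := fun k => div_nonneg (hE k) (hNpos k).le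
  have hVnn : ∀ k, 0 ≤ V k := fun k =>
    Finset.sum_nonneg fun i _ => Finset.sum_nonneg fun j _ => sq_nonneg _
  have hg : 0 < γ * (2 - γ) := mul_pos hγ0 (by linarith)
  have key : ∀ k, γ * (2 - γ) * f k ≤ V k - V (k + 1) := by
    intro k
    set c := γ / N k with hc
    set E := ∑ i, ε (k + 1) i ^ 2 with hEdef
    set P := ∑ j, φ k j ^ 2 with hPdef
    have hei : ∀ i, ε (k + 1) i = ∑ j, (Θhat k - Θstar) i j * φ k j := fun i => by
      rw [hε k]; simp [Matrix.mulVec, dotProduct]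
    have entry : ∀ i j, (Θhat (k + 1) - Θstar) i j
        = (Θhat k - Θstar) i j - c * (ε (k + 1) i * φ k j) := by
      intro i j
      rw [hupd k]
      simp [Matrix.sub_apply, Matrix.smul_apply, Matrix.vecMulVec_apply]
      ring
    have expand : V (k + 1) = V k - 2 * c * E + c ^ 2 * (E * P) := by
      have h1 : V (k + 1) = ∑ i, ∑ j,
          ((Θhat k - Θstar) i j ^ 2
            - 2 * c * (ε (k + 1) i * ((Θhat k - Θstar) i j * φ k j))
            + c ^ 2 * (ε (k + 1) i ^ 2 * φ k j ^ 2)) := by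
        refine Finset.sum_congr rfl fun i _ => Finset.sum_congr rfl fun j _ => ?_
        rw [entry i j]; ring
      rw [h1]
      have h2 : ∀ i : Fin m, ∑ j,
          ((Θhat k - Θstar) i j ^ 2
            - 2 * c * (ε (k + 1) i * ((Θhat k - Θstar) i j * φ k j))
            + c ^ 2 * (ε (k + 1) i ^ 2 * φ k j ^ 2))
          = (∑ j, (Θhat k - Θstar) i j ^ 2)
            - 2 * c * ε (k + 1) i ^ 2 + c ^ 2 * (ε (k + 1) i ^ 2 * P) := by
        intro i
        have e1 : ∑ j, 2 * c * (ε (k + 1) i * ((Θhat k - Θstar) i j * φ k j))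
            = 2 * c * ε (k + 1) i ^ 2 := by
          calc ∑ j, 2 * c * (ε (k + 1) i * ((Θhat k - Θstar) i j * φ k j))
              = 2 * c * ε (k + 1) i * ∑ j, (Θhat k - Θstar) i j * φ k j := by
                rw [Finset.mul_sum]; exact Finset.sum_congr rfl fun j _ => by ring
            _ = 2 * c * ε (k + 1) i ^ 2 := by rw [← hei i]; ring
        have e2 : ∑ j, c ^ 2 * (ε (k + 1) i ^ 2 * φ k j ^ 2)
            = c ^ 2 * (ε (k + 1) i ^ 2 * P) := by
          rw [hPdef, Finset.mul_sum, Finset.mul_sum]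
        rw [Finset.sum_add_distrib, Finset.sum_sub_distrib, e1, e2]
      rw [Finset.sum_congr rfl fun i _ => h2 i]
      rw [Finset.sum_add_distrib, Finset.sum_sub_distrib, ← Finset.mul_sum,
        ← Finset.mul_sum, ← Finset.sum_mul]
    have hNne : (N k) ≠ 0 := (hNpos k).ne'
    have ineq : γ * (2 - γ) * (E / N k) ≤ 2 * c * E - c ^ 2 * (E * P) := by
      have hkey : 2 * c * E - c ^ 2 * (E * P) - γ * (2 - γ) * (E / N k)
          = γ ^ 2 * E * (N k - P) / N k ^ 2 := by
        rw [hc]; field_simp; ring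
      have hnn : 0 ≤ γ ^ 2 * E * (N k - P) / N k ^ 2 :=
        div_nonneg (mul_nonneg (mul_nonneg (sq_nonneg γ) (hE k))
          (sub_nonneg.2 (hPN k))) (sq_nonneg _)
      linarith [hkey ▸ hnn]
    have : f k = E / N k := rfl
    rw [this]
    linarith [expand, ineq]
  have hsum : ∀ n, ∑ k ∈ Finset.range n, f k ≤ V 0 / (γ * (2 - γ)) := by
    intro n
    have h1 : γ * (2 - γ) * ∑ k ∈ Finset.range n, f k ≤ V 0 - V n := by
      rw [Finset.mul_sum]
      calc ∑ k ∈ Finset.range n, γ * (2 - γ) * f k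
          ≤ ∑ k ∈ Finset.range n, (V k - V (k + 1)) :=
            Finset.sum_le_sum fun k _ => key k
        _ = V 0 - V n := Finset.sum_range_sub' V n
    rw [le_div_iff₀ hg]
    have := hVnn n
    linarith [h1]
  have hS : Summable f := summable_of_sum_range_le hf0 hsum
  refine ⟨hS, ?_, hS.tendsto_atTop_zero⟩
  exact Summable.tsum_le_of_sum_range_le hS hsum
end

section
/- Consider the plant x_{p(k+1)} = A_p x_{pk} + B(Σ_{i=1}^p a_i f_i(x_{pk}) + u_k) with A_p ∈ ℝ^{n×n}, B ∈ ℝ^{n×m} of full column rank, a_i ∈ ℝ^m, and each f_i : ℝ^n → ℝ globally Lipschitz with f_i(0) = 0. Suppose A_m ∈ ℝ^{n×n} has spectral radius < 1 and satisfies the matching condition A_m = A_p + B K_* for some K_* ∈ ℝ^{m×n}, and the reference model is x_{m(k+1)} = A_m x_{mk} + B r_k with ‖r_k‖ ≤ r_max for all k. Let φ_k = (x_{pk}, −f_1(x_{pk}), ..., −f_p(x_{pk})) ∈ ℝ^{n+p}, let the control be u_k = Θ̂_k φ_k + r_k, the tracking error e_k = x_{pk} − x_{mk}, the prediction error ε_{k+1}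 = (B^⊤B)^{−1}B^⊤(e_{k+1} − A_m e_k), and update the parameter estimate by the normalized gradient-descent law N_k = max{μ, ‖φ_k‖²}, Θ̂_{k+1} = Θ̂_k − (γ/N_k) ε_{k+1} φ_k^⊤, with μ > 0 and 0 < γ < 2 and arbitrary Θ̂_0. Then lim_{k→∞} ‖e_k‖ = 0. -/
/-!
Write `Θ̃ = Θ̂ - Θ_*`. The matching condition turns the closed loop into
`e_{k+1} = A_m e_k + B Θ̃_k φ_k`, so the prediction error is `ε_{k+1} = Θ̃_k φ_k`. Under the
normalized gradient law `‖Θ̃_k‖_F²` drops by at least `γ (2 - γ) ‖ε_{k+1}‖² / N_k` at every step,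
hence `‖ε_{k+1}‖ ≤ s_k (√μ + ‖φ_k‖)` with `s_k → 0`.

Since `A_m` is Schur stable, Gelfand's formula makes `∑ ‖A_mᵏ‖` finite, and
`L v = ∑ₖ ‖A_mᵏ v‖` is a norm in which `A_m` is a strict contraction. The regressor grows at most
linearly in `x_p = e + x_m` and `x_m` is bounded, so `L e_{k+1} ≤ ρ L e_k + s'_k (c + d L e_k)`
with `ρ < 1` and `s'_k → 0`. Once `s'_k d ≤ (1 - ρ) / 2` this is a contraction with vanishing
input, and `L e_k → 0`.
-/

open Filter Topology WithLp Matrix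

theorem tendsto_zero_of_le_mul_add {a b : ℕ → ℝ} {ρ : ℝ} (hρ0 : 0 ≤ ρ) (hρ1 : ρ < 1)
    (ha : ∀ k, 0 ≤ a k) (hrec : ∀ᶠ k in atTop, a (k + 1) ≤ ρ * a k + b k)
    (hb : Tendsto b atTop (𝓝 0)) : Tendsto a atTop (𝓝 0) := by
  refine tendsto_order.2 ⟨fun c hc => Eventually.of_forall fun k => hc.trans_le (ha k),
    fun δ hδ => ?_⟩
  -- `b k ≤ (1 - ρ) δ / 2` makes `a k - δ / 2` contract geometrically
  have hb' : ∀ᶠ k in atTop, b k ≤ (1 - ρ) * (δ / 2) :=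
    hb.eventually (ge_mem_nhds (by nlinarith))
  obtain ⟨K, hK⟩ := eventually_atTop.1 (hrec.and hb')
  have hgeom : ∀ j, a (K + j) - δ / 2 ≤ ρ ^ j * (a K - δ / 2) := fun j =>
    le_geom (u := fun j => a (K + j) - δ / 2) hρ0 j fun i _ => by
      have := hK (K + i) (Nat.le_add_right K i)
      simp only [← add_assoc]
      nlinarith
  have hpow : Tendsto (fun j => ρ ^ j * (a K - δ / 2)) atTop (𝓝 0) := by
    simpa using (tendsto_pow_atTop_nhds_zero_of_lt_one hρ0 hρ1).mul_const (a K - δ / 2)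
  obtain ⟨J, hJ⟩ := eventually_atTop.1 (hpow.eventually (gt_mem_nhds (half_pos hδ)))
  refine eventually_atTop.2 ⟨K + J, fun k hk => ?_⟩
  obtain ⟨j, rfl⟩ := Nat.exists_eq_add_of_le (le_of_add_le_left hk)
  linarith [hgeom j, hJ j (by omega)]

theorem tendsto_zero_of_le_mul_add_mul {a s : ℕ → ℝ} {ρ c d : ℝ} (hρ0 : 0 ≤ ρ) (hρ1 : ρ < 1)
    (ha : ∀ k, 0 ≤ a k) (hrec : ∀ k, a (k + 1) ≤ ρ * a k + s k * (c + d * a k))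
    (hs : Tendsto s atTop (𝓝 0)) : Tendsto a atTop (𝓝 0) := by
  have hsd : ∀ᶠ k in atTop, s k * d ≤ (1 - ρ) / 2 := by
    have : Tendsto (fun k => s k * d) atTop (𝓝 0) := by simpa using hs.mul_const d
    exact this.eventually (ge_mem_nhds (by linarith))
  refine tendsto_zero_of_le_mul_add (ρ := (1 + ρ) / 2) (b := fun k => s k * c) (by linarith)
    (by linarith) ha (hsd.mono fun k hk => ?_) (by simpa using hs.mul_const c)
  nlinarith [hrec k, ha k]

theorem le_max_div_of_le_mul_add {a : ℕ → ℝ} {ρ b : ℝ} (hρ0 : 0 ≤ ρ) (hρ1 : ρ < 1)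
    (hrec : ∀ k, a (k + 1) ≤ ρ * a k + b) (k : ℕ) : a k ≤ max (a 0) (b / (1 - ρ)) := by
  induction k with
  | zero => exact le_max_left _ _
  | succ k ih =>
    have hb : b ≤ (1 - ρ) * max (a 0) (b / (1 - ρ)) := by
      rw [← div_le_iff₀' (by linarith)]; exact le_max_right _ _
    nlinarith [hrec k, mul_le_mul_of_nonneg_left ih hρ0]

namespace ContinuousLinearMap

variable {𝕜 E : Type*} [NontriviallyNormedField 𝕜] [SeminormedAddCommGroup E]
  [NormedSpace 𝕜 E]

noncomputable def lyapunovNorm (T : E →L[𝕜] E) (v : E) : ℝ := ∑' k, ‖(T ^ k) v‖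

variable {T : E →L[𝕜] E}

theorem summable_norm_pow_apply (hT : Summable fun k => ‖T ^ k‖) (v : E) :
    Summable fun k => ‖(T ^ k) v‖ :=
  (hT.mul_right ‖v‖).of_nonneg_of_le (fun _ => norm_nonneg _) fun _ => le_opNorm _ _

theorem lyapunovNorm_eq_norm_add (hT : Summable fun k => ‖T ^ k‖) (v : E) :
    lyapunovNorm T v = ‖v‖ + lyapunovNorm T (T v) := by
  simp only [lyapunovNorm, (summable_norm_pow_apply hT v).tsum_eq_zero_add, pow_zero,
    one_apply_eq_self, pow_succ, mul_apply_eq_comp]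

theorem norm_le_lyapunovNorm (hT : Summable fun k => ‖T ^ k‖) (v : E) :
    ‖v‖ ≤ lyapunovNorm T v := by
  rw [lyapunovNorm_eq_norm_add hT]
  exact le_add_of_nonneg_right (tsum_nonneg fun _ => norm_nonneg _)

theorem lyapunovNorm_le (hT : Summable fun k => ‖T ^ k‖) (v : E) :
    lyapunovNorm T v ≤ (∑' k, ‖T ^ k‖) * ‖v‖ := by
  rw [← tsum_mul_right]
  exact (summable_norm_pow_apply hT v).tsum_le_tsum (fun k => le_opNorm _ _) (hT.mul_right _)

theorem lyapunovNorm_add_le (hT : Summable fun k => ‖T ^ k‖) (v w : E) :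
    lyapunovNorm T (v + w) ≤ lyapunovNorm T v + lyapunovNorm T w := by
  rw [lyapunovNorm, lyapunovNorm, lyapunovNorm,
    ← (summable_norm_pow_apply hT v).tsum_add (summable_norm_pow_apply hT w)]
  exact (summable_norm_pow_apply hT _).tsum_le_tsum
    (fun k => by simpa only [map_add] using norm_add_le _ _)
    ((summable_norm_pow_apply hT v).add (summable_norm_pow_apply hT w))

theorem lyapunovNorm_apply_le (hT : Summable fun k => ‖T ^ k‖) (v : E) :
    lyapunovNorm T (T v) ≤ (1 - (1 + ∑' k, ‖T ^ k‖)⁻¹) * lyapunovNorm T v := by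
  have hC : 0 < 1 + ∑' k, ‖T ^ k‖ := by positivity
  have hv : lyapunovNorm T v ≤ (1 + ∑' k, ‖T ^ k‖) * ‖v‖ :=
    (lyapunovNorm_le hT v).trans (by nlinarith [norm_nonneg v])
  have hv' := (inv_mul_le_iff₀ hC).mpr hv
  linarith [lyapunovNorm_eq_norm_add hT v]

theorem tendsto_zero_of_vanishing_gain (hT : Summable fun k => ‖T ^ k‖) {e x w v : ℕ → E}
    {s : ℕ → ℝ} {c d R : ℝ} (hs0 : ∀ k, 0 ≤ s k) (hd : 0 ≤ d)
    (he : ∀ k, e (k + 1) = T (e k) + w k) (hx : ∀ k, x (k + 1) = T (x k) + v k)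
    (hv : ∀ k, ‖v k‖ ≤ R) (hw : ∀ k, ‖w k‖ ≤ s k * (c + d * ‖e k + x k‖))
    (hs : Tendsto s atTop (𝓝 0)) :
    Tendsto e atTop (𝓝 0) := by
  set L := lyapunovNorm T
  set C := ∑' k, ‖T ^ k‖
  set ρ := 1 - (1 + C)⁻¹
  have hC : 0 ≤ C := tsum_nonneg fun _ => norm_nonneg _
  have hρ0 : 0 ≤ ρ := sub_nonneg.2 (inv_le_one_of_one_le₀ (by linarith))
  have hρ1 : ρ < 1 := sub_lt_self _ (by positivity)
  have hstep : ∀ u z, L (T u + z) ≤ ρ * L u + C * ‖z‖ := fun u z =>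
    (lyapunovNorm_add_le hT _ _).trans
      (add_le_add (lyapunovNorm_apply_le hT u) (lyapunovNorm_le hT z))
  set X := max (L (x 0)) (C * R / (1 - ρ))
  have hxX : ∀ k, L (x k) ≤ X := le_max_div_of_le_mul_add hρ0 hρ1 fun k => by
    rw [hx k]
    exact (hstep _ _).trans (by gcongr; exact hv k)
  have hrec : ∀ k, L (e (k + 1)) ≤ ρ * L (e k) + C * s k * ((c + d * X) + d * L (e k)) := by
    intro k
    have hex : ‖e k + x k‖ ≤ L (e k) + X := (norm_add_le _ _).trans
      (add_le_add (norm_le_lyapunovNorm hT _) ((norm_le_lyapunovNorm hT _).trans (hxX k)))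
    calc L (e (k + 1)) ≤ ρ * L (e k) + C * (s k * (c + d * ‖e k + x k‖)) := by
          rw [he k]; exact (hstep _ _).trans (by gcongr; exact hw k)
      _ ≤ ρ * L (e k) + C * (s k * (c + d * (L (e k) + X))) := by
          gcongr; exact hs0 k
      _ = ρ * L (e k) + C * s k * ((c + d * X) + d * L (e k)) := by ring
  have hLe : Tendsto (fun k => L (e k)) atTop (𝓝 0) :=
    tendsto_zero_of_le_mul_add_mul hρ0 hρ1
      (fun k => (norm_nonneg _).trans (norm_le_lyapunovNorm hT _)) hrec
      (by simpa using hs.const_mul C)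
  exact squeeze_zero_norm (fun k => norm_le_lyapunovNorm hT _) hLe

end ContinuousLinearMap

theorem spectralRadius_lt_one_of_forall_norm_lt_one {A : Type*} [NormedRing A]
    [NormedAlgebra ℂ A] [CompleteSpace A] {a : A} (h : ∀ z ∈ spectrum ℂ a, ‖z‖ < 1) :
    spectralRadius ℂ a < 1 := by
  rcases (spectrum ℂ a).eq_empty_or_nonempty with hempty | hne
  · simp [spectralRadius, hempty]
  · exact_mod_cast spectrum.spectralRadius_lt_of_forall_lt_of_nonempty hne
      (r := 1) fun z hz => by simpa [← NNReal.coe_lt_coe] using h z hz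

theorem summable_norm_pow_of_spectralRadius_lt_one {A : Type*} [NormedRing A]
    [NormedAlgebra ℂ A] [CompleteSpace A] {a : A} (h : spectralRadius ℂ a < 1) :
    Summable fun k => ‖a ^ k‖ := by
  obtain ⟨ρ, hρa, hρ1⟩ := ENNReal.lt_iff_exists_nnreal_btwn.1 h
  have hev :=
    (spectrum.pow_nnnorm_pow_one_div_tendsto_nhds_spectralRadius a).eventually_lt_const hρa
  refine Summable.of_norm_bounded_eventually_nat
    (summable_geometric_of_lt_one ρ.coe_nonneg (by exact_mod_cast hρ1)) ?_
  filter_upwards [hev, eventually_ge_atTop 1] with k hk hk1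
  have hk0 : (0 : ℝ) < k := by exact_mod_cast hk1
  rw [one_div, ENNReal.rpow_inv_lt_iff hk0, ENNReal.rpow_natCast] at hk
  rw [Real.norm_of_nonneg (norm_nonneg _), ← coe_nnnorm, ← NNReal.coe_pow]
  exact_mod_cast hk.le

section Frobenius

open scoped Matrix.Norms.Frobenius

theorem Matrix.frobenius_norm_mulVec_le {α m n : Type*} [RCLike α] [Fintype m] [Fintype n]
    (A : Matrix m n α) (v : n → α) : ‖toLp 2 (A *ᵥ v)‖ ≤ ‖A‖ * ‖toLp 2 v‖ := by
  rw [← frobenius_norm_replicateCol (ι := Unit), ← frobenius_norm_replicateCol (ι := Unit),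
    replicateCol_mulVec]
  exact frobenius_norm_mul _ _

theorem Matrix.norm_toEuclideanCLM_le_frobenius_norm {α n : Type*} [RCLike α] [Fintype n]
    [DecidableEq n] (A : Matrix n n α) : ‖toEuclideanCLM (𝕜 := α) A‖ ≤ ‖A‖ :=
  ContinuousLinearMap.opNorm_le_bound _ (norm_nonneg A) fun v => frobenius_norm_mulVec_le A v

theorem summable_norm_pow_toEuclideanCLM {n : Type*} [Fintype n] [DecidableEq n]
    {A : Matrix n n ℝ} (h : ∀ z ∈ spectrum ℂ (A.map Complex.ofReal), ‖z‖ < 1) :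
    Summable fun k => ‖toEuclideanCLM (𝕜 := ℝ) A ^ k‖ := by
  have hC : Summable fun k => ‖A.map Complex.ofReal ^ k‖ :=
    summable_norm_pow_of_spectralRadius_lt_one
      (spectralRadius_lt_one_of_forall_norm_lt_one (A := Matrix n n ℂ) h)
  refine hC.of_nonneg_of_le (fun _ => norm_nonneg _) fun k => ?_
  have hmap : A.map Complex.ofReal ^ k = (A ^ k).map Complex.ofReal :=
    (map_pow Complex.ofRealHom.mapMatrix A k).symm
  rw [← map_pow, hmap]
  exact (norm_toEuclideanCLM_le_frobenius_norm _).trans_eq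
    (frobenius_norm_map_eq _ _ Complex.norm_real).symm

theorem tendsto_norm_toLp_of_vanishing_gain {ι κ : Type*} [Fintype ι] [DecidableEq ι]
    [Fintype κ] {A : Matrix ι ι ℝ} (B : Matrix ι κ ℝ)
    (hA : ∀ z ∈ spectrum ℂ (A.map Complex.ofReal), ‖z‖ < 1)
    {e x : ℕ → ι → ℝ} {w v : ℕ → κ → ℝ} {s : ℕ → ℝ} {c d R : ℝ} (hs0 : ∀ k, 0 ≤ s k)
    (hd : 0 ≤ d) (he : ∀ k, e (k + 1) = A *ᵥ e k + B *ᵥ w k)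
    (hx : ∀ k, x (k + 1) = A *ᵥ x k + B *ᵥ v k) (hv : ∀ k, ‖toLp 2 (v k)‖ ≤ R)
    (hw : ∀ k, ‖toLp 2 (w k)‖ ≤ s k * (c + d * ‖toLp 2 (e k + x k)‖))
    (hs : Tendsto s atTop (𝓝 0)) : Tendsto (fun k => ‖toLp 2 (e k)‖) atTop (𝓝 0) := by
  have hT := summable_norm_pow_toEuclideanCLM hA
  have hlim := ContinuousLinearMap.tendsto_zero_of_vanishing_gain hT
    (e := fun k => toLp 2 (e k)) (x := fun k => toLp 2 (x k))
    (w := fun k => toLp 2 (B *ᵥ w k)) (v := fun k => toLp 2 (B *ᵥ v k))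
    (s := fun k => ‖B‖ * s k) (c := c) (R := ‖B‖ * R)
    (fun k => mul_nonneg (norm_nonneg B) (hs0 k)) hd
    (fun k => by dsimp only; rw [he, toLp_add, toEuclideanCLM_toLp])
    (fun k => by dsimp only; rw [hx, toLp_add, toEuclideanCLM_toLp])
    (fun k => (frobenius_norm_mulVec_le B _).trans (by gcongr; exact hv k))
    (fun k => by
      dsimp only
      rw [← toLp_add, mul_assoc]
      exact (frobenius_norm_mulVec_le B _).trans (by gcongr; exact hw k))
    (by simpa using hs.const_mul ‖B‖)
  exact tendsto_zero_iff_norm_tendsto_zero.1 hlim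

end Frobenius

theorem EuclideanSpace.real_norm_toLp_sq {ι : Type*} [Fintype ι] (v : ι → ℝ) :
    ‖toLp 2 v‖ ^ 2 = ∑ i, v i ^ 2 :=
  EuclideanSpace.real_norm_sq_eq _

theorem EuclideanSpace.real_norm_toLp {ι : Type*} [Fintype ι] (v : ι → ℝ) :
    ‖toLp 2 v‖ = √(∑ i, v i ^ 2) := by
  rw [← real_norm_toLp_sq, Real.sqrt_sq (norm_nonneg _)]

theorem sqrt_max_le_sqrt_add_norm {ι : Type*} [Fintype ι] {μ : ℝ} (hμ : 0 ≤ μ) (v : ι → ℝ) :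
    √(max μ (∑ i, v i ^ 2)) ≤ √μ + ‖toLp 2 v‖ := by
  rw [Real.sqrt_le_iff, ← EuclideanSpace.real_norm_toLp_sq]
  refine ⟨by positivity, max_le ?_ ?_⟩ <;>
    nlinarith [Real.sq_sqrt hμ, Real.sqrt_nonneg μ, norm_nonneg (toLp 2 v)]

theorem norm_toLp_append_le {n p : ℕ} (x : Fin n → ℝ) (y : Fin p → ℝ) (M : Fin p → ℝ)
    (hy : ∀ j, |y j| ≤ M j * ‖toLp 2 x‖) :
    ‖toLp 2 (Fin.append x y)‖ ≤ √(1 + ∑ j, M j ^ 2) * ‖toLp 2 x‖ := by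
  have hy2 : ∀ j, y j ^ 2 ≤ M j ^ 2 * ‖toLp 2 x‖ ^ 2 := fun j => by
    rw [← sq_abs, ← mul_pow]
    exact pow_le_pow_left₀ (abs_nonneg _) (hy j) 2
  refine le_of_pow_le_pow_left₀ two_ne_zero (by positivity) ?_
  have hsum := Finset.sum_le_sum fun j (_ : j ∈ Finset.univ) => hy2 j
  rw [← Finset.sum_mul] at hsum
  rw [mul_pow, Real.sq_sqrt (by positivity), EuclideanSpace.real_norm_toLp_sq, Fin.sum_univ_add]
  simp only [Fin.append_left, Fin.append_right, ← EuclideanSpace.real_norm_toLp_sq x]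
  linarith

theorem sum_sq_sub_smul_vecMulVec_mulVec {m q : Type*} [Fintype m] [Fintype q]
    (Θ : Matrix m q ℝ) (φ : q → ℝ) (c : ℝ) :
    ∑ i, ∑ j, (Θ - c • vecMulVec (Θ *ᵥ φ) φ) i j ^ 2
      = ∑ i, ∑ j, Θ i j ^ 2 - c * (2 - c * ∑ j, φ j ^ 2) * ∑ i, (Θ *ᵥ φ) i ^ 2 := by
  have hrow : ∀ i, ∑ j, (Θ - c • vecMulVec (Θ *ᵥ φ) φ) i j ^ 2
      = ∑ j, Θ i j ^ 2 - c * (2 - c * ∑ j, φ j ^ 2) * (Θ *ᵥ φ) i ^ 2 := by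
    intro i
    have hε : ∑ j, Θ i j * φ j = (Θ *ᵥ φ) i := rfl
    calc ∑ j, (Θ - c • vecMulVec (Θ *ᵥ φ) φ) i j ^ 2
        = ∑ j, (Θ i j ^ 2 - 2 * c * (Θ *ᵥ φ) i * (Θ i j * φ j)
            + c ^ 2 * (Θ *ᵥ φ) i ^ 2 * φ j ^ 2) := by
          refine Finset.sum_congr rfl fun j _ => ?_
          simp only [Matrix.sub_apply, Matrix.smul_apply, vecMulVec_apply, smul_eq_mul]
          ring
      _ = _ := by
          rw [Finset.sum_add_distrib, Finset.sum_sub_distrib, ← Finset.mul_sum, ← Finset.mul_sum,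
            hε]
          ring
  simp only [hrow, Finset.sum_sub_distrib, ← Finset.mul_sum]

theorem summable_sq_div_of_normalized_gradient {m q : Type*} [Fintype m] [Fintype q]
    {Θ : ℕ → Matrix m q ℝ} {φ : ℕ → q → ℝ} {N : ℕ → ℝ} {γ : ℝ} (hγ0 : 0 < γ) (hγ2 : γ < 2)
    (hN : ∀ k, 0 < N k) (hφN : ∀ k, ∑ j, φ k j ^ 2 ≤ N k)
    (hupd : ∀ k, Θ (k + 1) = Θ k - (γ / N k) • vecMulVec (Θ k *ᵥ φ k) (φ k)) :
    Summable fun k => (∑ i, (Θ k *ᵥ φ k) i ^ 2) / N k := by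
  set V := fun k => ∑ i, ∑ j, Θ k i j ^ 2
  set t := fun k => (∑ i, (Θ k *ᵥ φ k) i ^ 2) / N k
  have ht : ∀ k, 0 ≤ t k := fun k => div_nonneg (by positivity) (hN k).le
  have hdesc : ∀ k, γ * (2 - γ) * t k ≤ V k - V (k + 1) := by
    intro k
    have hP : γ / N k * ∑ j, φ k j ^ 2 ≤ γ := by
      rw [div_mul_eq_mul_div, div_le_iff₀ (hN k)]
      exact mul_le_mul_of_nonneg_left (hφN k) hγ0.le
    have hγN : 0 ≤ γ / N k := div_nonneg hγ0.le (hN k).le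
    calc γ * (2 - γ) * t k = γ / N k * (2 - γ) * ∑ i, (Θ k *ᵥ φ k) i ^ 2 := by
          simp only [t]; ring
      _ ≤ γ / N k * (2 - γ / N k * ∑ j, φ k j ^ 2) * ∑ i, (Θ k *ᵥ φ k) i ^ 2 := by gcongr
      _ = V k - V (k + 1) := by simp only [V, hupd k, sum_sq_sub_smul_vecMulVec_mulVec]; ring
  have hpartial : ∀ K, γ * (2 - γ) * ∑ k ∈ Finset.range K, t k ≤ V 0 := by
    intro K
    have hV : 0 ≤ V K := by positivity
    rw [Finset.mul_sum]
    linarith [Finset.sum_range_sub' V K,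
      Finset.sum_le_sum fun k (_ : k ∈ Finset.range K) => hdesc k]
  exact summable_of_sum_range_le (c := V 0 / (γ * (2 - γ))) ht fun K => by
    rw [le_div_iff₀' (by nlinarith)]; exact hpartial K

theorem exists_norm_mulVec_le_of_normalized_gradient {m q : Type*} [Fintype m] [Fintype q]
    {Θ : ℕ → Matrix m q ℝ} {φ : ℕ → q → ℝ} {μ γ : ℝ} (hμ : 0 < μ) (hγ0 : 0 < γ) (hγ2 : γ < 2)
    (hupd : ∀ k, Θ (k + 1)
      = Θ k - (γ / max μ (∑ j, φ k j ^ 2)) • vecMulVec (Θ k *ᵥ φ k) (φ k)) :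
    ∃ s : ℕ → ℝ, (∀ k, 0 ≤ s k) ∧ Tendsto s atTop (𝓝 0) ∧
      ∀ k, ‖toLp 2 (Θ k *ᵥ φ k)‖ ≤ s k * (√μ + ‖toLp 2 (φ k)‖) := by
  set N := fun k => max μ (∑ j, φ k j ^ 2)
  have hN : ∀ k, 0 < N k := fun k => lt_max_of_lt_left hμ
  have hsum :=
    summable_sq_div_of_normalized_gradient hγ0 hγ2 hN (fun k => le_max_right _ _) hupd
  refine ⟨fun k => √((∑ i, (Θ k *ᵥ φ k) i ^ 2) / N k), fun k => Real.sqrt_nonneg _,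
    by simpa using hsum.tendsto_atTop_zero.sqrt, fun k => ?_⟩
  calc ‖toLp 2 (Θ k *ᵥ φ k)‖ = √((∑ i, (Θ k *ᵥ φ k) i ^ 2) / N k) * √(N k) := by
        rw [← Real.sqrt_mul (div_nonneg (by positivity) (hN k).le),
          div_mul_cancel₀ _ (hN k).ne', EuclideanSpace.real_norm_toLp]
    _ ≤ _ := by gcongr; exact sqrt_max_le_sqrt_add_norm hμ.le _

def trueParam {n m p : ℕ} (K : Matrix (Fin m) (Fin n) ℝ) (a : Fin p → Fin m → ℝ) :
    Matrix (Fin m) (Fin (n + p)) ℝ :=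
  Matrix.of fun i => Fin.append (K i) fun j => a j i

theorem trueParam_mulVec_append {n m p : ℕ} (K : Matrix (Fin m) (Fin n) ℝ)
    (a : Fin p → Fin m → ℝ) (x : Fin n → ℝ) (y : Fin p → ℝ) :
    trueParam K a *ᵥ Fin.append x y = K *ᵥ x + ∑ j, y j • a j := by
  ext i
  simp [trueParam, mulVec, dotProduct, Fin.sum_univ_add, Finset.sum_apply, mul_comm]

theorem error_step_eq_of_matching {n m p : ℕ} {Ap Am : Matrix (Fin n) (Fin n) ℝ}
    {B : Matrix (Fin n) (Fin m) ℝ} {K : Matrix (Fin m) (Fin n) ℝ} (hmatch : Am = Ap + B * K)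
    (a : Fin p → Fin m → ℝ) (f : Fin p → (Fin n → ℝ) → ℝ) (Θ : Matrix (Fin m) (Fin (n + p)) ℝ)
    (x xm : Fin n → ℝ) (r : Fin m → ℝ) :
    Ap *ᵥ x + B *ᵥ ((∑ j, f j x • a j) + (Θ *ᵥ Fin.append x (fun j => -f j x) + r))
        - (Am *ᵥ xm + B *ᵥ r)
      = Am *ᵥ (x - xm) + B *ᵥ ((Θ - trueParam K a) *ᵥ Fin.append x (fun j => -f j x)) := by
  simp only [hmatch, sub_mulVec, trueParam_mulVec_append, add_mulVec, mulVec_add, mulVec_sub,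
    ← mulVec_mulVec, neg_smul, Finset.sum_neg_distrib, mulVec_neg]
  abel

theorem inv_transpose_mul_self_mulVec_transpose_mulVec_mulVec {m n R : Type*} [Fintype m]
    [Fintype n] [DecidableEq n] [Field R] [LinearOrder R] [IsStrictOrderedRing R]
    {B : Matrix m n R} (hB : Function.Injective B.mulVec) (w : n → R) :
    (Bᵀ * B)⁻¹ *ᵥ (Bᵀ *ᵥ (B *ᵥ w)) = w := by
  have hinj : Function.Injective (Bᵀ * B).mulVec := by
    change Function.Injective (Bᵀ * B).mulVecLin
    rw [← LinearMap.ker_eq_bot, ker_mulVecLin_transpose_mul_self, LinearMap.ker_eq_bot]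
    exact hB
  have hdet := (isUnit_iff_isUnit_det _).1 (mulVec_injective_iff_isUnit.1 hinj)
  rw [mulVec_mulVec, mulVec_mulVec, Matrix.mul_assoc, nonsing_inv_mul _ hdet, one_mulVec]

/-- adaptive control of the nonlinear plant with the normalized
    gradient-descent adaptive law drives the tracking error to zero. -/
theorem gd_adaptive_control_tracking_error_to_zero {n m p : ℕ}
    (Ap Am : Matrix (Fin n) (Fin n) ℝ) (B : Matrix (Fin n) (Fin m) ℝ)
    (a : Fin p → Fin m → ℝ) (f : Fin p → (Fin n → ℝ) → ℝ) (Mf : Fin p → ℝ)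
    (hB : Function.Injective B.mulVec)
    (hLip : ∀ i, ∀ x y : Fin n → ℝ,
      |f i x - f i y| ≤ Mf i * Real.sqrt (∑ j, (x j - y j) ^ 2))
    (hf0 : ∀ i, f i 0 = 0)
    (hSchur : ∀ z ∈ spectrum ℂ (Am.map Complex.ofReal), ‖z‖ < 1)
    (Kstar : Matrix (Fin m) (Fin n) ℝ) (hmatch : Am = Ap + B * Kstar)
    (r : ℕ → Fin m → ℝ) (rmax : ℝ)
    (hr : ∀ k, Real.sqrt (∑ i, r k i ^ 2) ≤ rmax)
    (xp xm : ℕ → Fin n → ℝ) (u : ℕ → Fin m → ℝ)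
    (Θhat : ℕ → Matrix (Fin m) (Fin (n + p)) ℝ)
    (φ : ℕ → Fin (n + p) → ℝ)
    (hφ : ∀ k, φ k = Fin.append (xp k) (fun i => -f i (xp k)))
    (hplant : ∀ k, xp (k + 1)
      = Ap.mulVec (xp k) + B.mulVec ((∑ i, f i (xp k) • a i) + u k))
    (hu : ∀ k, u k = (Θhat k).mulVec (φ k) + r k)
    (href : ∀ k, xm (k + 1) = Am.mulVec (xm k) + B.mulVec (r k))
    (e : ℕ → Fin n → ℝ) (he : ∀ k, e k = xp k - xm k)
    (ε : ℕ → Fin m → ℝ)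
    (hεdef : ∀ k, ε (k + 1)
      = (Bᵀ * B)⁻¹.mulVec (Bᵀ.mulVec (e (k + 1) - Am.mulVec (e k))))
    (μ γ : ℝ) (hμ : 0 < μ) (hγ0 : 0 < γ) (hγ2 : γ < 2)
    (N : ℕ → ℝ) (hN : ∀ k, N k = max μ (∑ j, φ k j ^ 2))
    (hupd : ∀ k, Θhat (k + 1)
      = Θhat k - (γ / N k) • Matrix.vecMulVec (ε (k + 1)) (φ k)) :
    Filter.Tendsto (fun k => Real.sqrt (∑ i, e k i ^ 2))
      Filter.atTop (nhds 0) := by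
  set Θerr := fun k => Θhat k - trueParam Kstar a
  have hdyn : ∀ k, e (k + 1) = Am *ᵥ e k + B *ᵥ (Θerr k *ᵥ φ k) := fun k => by
    rw [he, hplant, hu, href, he k, hφ]
    exact error_step_eq_of_matching hmatch a f _ _ _ _
  have hpred : ∀ k, ε (k + 1) = Θerr k *ᵥ φ k := fun k => by
    rw [hεdef, hdyn, add_sub_cancel_left,
      inv_transpose_mul_self_mulVec_transpose_mulVec_mulVec hB]
  obtain ⟨s, hs0, hs, hεs⟩ := exists_norm_mulVec_le_of_normalized_gradient (Θ := Θerr)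
    (φ := φ) hμ hγ0 hγ2 fun k => by
      rw [← hpred k, ← hN k]; simp only [Θerr, hupd k, sub_right_comm]
  have hφx : ∀ k, ‖toLp 2 (φ k)‖ ≤ √(1 + ∑ i, Mf i ^ 2) * ‖toLp 2 (xp k)‖ := fun k =>
    hφ k ▸ norm_toLp_append_le _ _ Mf fun i => by
      simpa [hf0, EuclideanSpace.real_norm_toLp] using hLip i (xp k) 0
  simpa only [EuclideanSpace.real_norm_toLp] using
    tendsto_norm_toLp_of_vanishing_gain B hSchur (c := √μ) (R := rmax) hs0 (Real.sqrt_nonneg _)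
      hdyn href (fun k => (EuclideanSpace.real_norm_toLp _).trans_le (hr k))
      (fun k => by
        rw [he k, sub_add_cancel]
        exact (hεs k).trans (by gcongr; exacts [hs0 k, hφx k]))
      hs
end

section
/- Fix Θ_* ∈ ℝ^{m×q}, μ > 0, 0 < β < 2, 0 < γ < √((2−β)/β), and suppose α := 2(1−γ) − γ(2−3β)²/(β(2−(1+γ²)β)) > 0. Let (φ_k)_{k≥0} be any sequence in ℝ^q and run the high-order tuner: N_k = max{μ, ‖φ_k‖²}, ε_{k+1} = (Θ̂_k − Θ_*)φ_k, Θ̄_k = Θ̂_k − (γβ/N_k) ε_{k+1} φ_k^⊤, Θ̂_{k+1} = Θ̄_k − β(Θ̄_k − Ξ̂_k), Ξ̂_{k+1} = Ξ̂_k − (γ/N_k)((Θ̂_{k+1} − Θ̂_k)φ_k + ε_{k+1})φ_k^⊤, initialized with Ξ̂_0 = Θ̂_0. Then V_k = ‖Ξ̂_k − Θ_*‖_F² + ‖Θ̂_k − Ξ̂_k‖_F² satisfies V_{k+1} − V_k ≤ −γα(1−γβ)² (2/(2+α)) ‖ε_{k+1}‖²/N_k ≤ 0 for all k. -/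
/-!
Write `U = Θ̄_k − Ξ̂_k`, `h = U φ_k` and `w = (1 − γβ‖φ_k‖²/N_k) ε_{k+1} − β h`. Both updates of the
tuner are rank-one corrections along `φ_k` (`Θ̂_{k+1} − Ξ̂_k = (1 − β) U`, and the `Ξ̂`-update is
`−(γ/N_k) w φ_kᵀ`), so expanding the Frobenius norms turns `V_{k+1} − V_k` into a quadratic form in
`w`, `h`, `ε_{k+1}` and `‖U‖_F²`. Using `‖U φ_k‖² ≤ ‖U‖_F² ‖φ_k‖²` and completing squares (after
multiplying by `d = β(2 − (1 + γ²)β) > 0`, which is where `α` comes from) bounds it by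
`−(γ/N_k)(α‖w‖² + 2β²‖h‖²)`. Finally `w + βh` is a multiple of `ε_{k+1}` with factor at least
`1 − γβ`, and `2α‖w + βh‖² ≤ (2 + α)(α‖w‖² + 2β²‖h‖²)`.
-/

open Matrix

namespace Matrix

variable {m n R : Type*}

lemma vecMulVec_mulVec_eq_smul [Fintype n] [CommSemiring R] (u : m → R) (v w : n → R) :
    vecMulVec u v *ᵥ w = (v ⬝ᵥ w) • u := by
  rw [vecMulVec_mulVec, op_smul_eq_smul]

variable [Fintype m]

lemma dotProduct_self_nonneg [Ring R] [LinearOrder R] [IsStrictOrderedRing R] (v : m → R) :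
    0 ≤ v ⬝ᵥ v :=
  Finset.sum_nonneg fun i _ => mul_self_nonneg (v i)

lemma dotProduct_self_eq_sum_sq [Semiring R] (v : m → R) : v ⬝ᵥ v = ∑ i, v i ^ 2 := by
  simp only [dotProduct, sq]

lemma two_mul_mul_dotProduct_le (a b : ℝ) (v w : m → ℝ) :
    2 * a * b * (v ⬝ᵥ w) ≤ a ^ 2 * (v ⬝ᵥ v) + b ^ 2 * (w ⬝ᵥ w) := by
  have := dotProduct_self_nonneg (a • v - b • w)
  simp only [sub_dotProduct, dotProduct_sub, smul_dotProduct, dotProduct_smul, smul_eq_mul,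
    dotProduct_comm w v] at this
  linarith

lemma two_mul_dotProduct_add_smul_self_le (α β : ℝ) (w h : m → ℝ) :
    2 * α * ((w + β • h) ⬝ᵥ (w + β • h))
      ≤ (2 + α) * (α * (w ⬝ᵥ w) + 2 * β ^ 2 * (h ⬝ᵥ h)) := by
  have := two_mul_mul_dotProduct_le α (2 * β) w h
  simp only [add_dotProduct, dotProduct_add, smul_dotProduct, dotProduct_smul, smul_eq_mul,
    dotProduct_comm h w]
  linarith

variable [Fintype n]

def frobSq (M : Matrix m n ℝ) : ℝ := ∑ i, ∑ j, M i j ^ 2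

lemma frobSq_nonneg (M : Matrix m n ℝ) : 0 ≤ frobSq M := by
  unfold frobSq; positivity

lemma frobSq_smul (c : ℝ) (M : Matrix m n ℝ) : frobSq (c • M) = c ^ 2 * frobSq M := by
  simp only [frobSq, smul_apply, smul_eq_mul, mul_pow, Finset.mul_sum]

lemma frobSq_add_smul_vecMulVec (M : Matrix m n ℝ) (c : ℝ) (v : m → ℝ) (x : n → ℝ) :
    frobSq (M + c • vecMulVec v x)
      = frobSq M + 2 * c * (v ⬝ᵥ M *ᵥ x) + c ^ 2 * (v ⬝ᵥ v) * (x ⬝ᵥ x) := by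
  calc frobSq (M + c • vecMulVec v x)
      = ∑ i, ∑ j, (M i j ^ 2 + 2 * c * (v i * (M i j * x j))
          + c ^ 2 * (v i * v i) * (x j * x j)) := by
        unfold frobSq
        refine Finset.sum_congr rfl fun i _ => Finset.sum_congr rfl fun j _ => ?_
        simp only [add_apply, smul_apply, vecMulVec_apply, smul_eq_mul]
        ring
    _ = _ := by
        simp only [Finset.sum_add_distrib, frobSq, dotProduct, mulVec, Finset.mul_sum,
          Finset.sum_mul]
        rw [Finset.sum_comm (f := fun i j => c ^ 2 * (v i * v i) * (x j * x j))]

lemma mulVec_dotProduct_self_le_frobSq_mul (M : Matrix m n ℝ) (x : n → ℝ) :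
    (M *ᵥ x) ⬝ᵥ (M *ᵥ x) ≤ frobSq M * (x ⬝ᵥ x) := by
  rw [frobSq, Finset.sum_mul]
  refine Finset.sum_le_sum fun i _ => ?_
  simpa only [sq, mulVec, dotProduct] using Finset.sum_mul_sq_le_sq_mul_sq Finset.univ (M i) x

end Matrix

namespace HighOrderTuner

lemma gain_margin_pos {γ β : ℝ} (hβ : 0 < β) (hγ0 : 0 ≤ γ) (hγ : γ < √((2 - β) / β)) :
    0 < β * (2 - (1 + γ ^ 2) * β) := by
  have := (lt_div_iff₀ hβ).mp ((Real.lt_sqrt hγ0).mp hγ)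
  nlinarith

lemma gain_mul_lt_one {γ β : ℝ} (hβ : 0 < β) (hγ0 : 0 ≤ γ) (hγ : γ < √((2 - β) / β)) :
    γ * β < 1 := by
  have := gain_margin_pos hβ hγ0 hγ
  nlinarith [sq_nonneg (1 - β)]

variable {m n : Type*} [Fintype m] [Fintype n]

lemma lyapunov_diff_eq {Θ Ξ Θs Θbar Θ' Ξ' : Matrix m n ℝ} {x : n → ℝ} {e h w : m → ℝ}
    {γ β ι : ℝ} (he : e = (Θ - Θs) *ᵥ x)
    (hΘbar : Θbar = Θ - (γ * β * ι) • vecMulVec e x)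
    (hΘ' : Θ' = Θbar - β • (Θbar - Ξ))
    (hΞ' : Ξ' = Ξ - (γ * ι) • vecMulVec ((Θ' - Θ) *ᵥ x + e) x)
    (hh : h = (Θbar - Ξ) *ᵥ x) (hw : w = (1 - γ * β * (x ⬝ᵥ x) * ι) • e - β • h) :
    frobSq (Ξ' - Θs) + frobSq (Θ' - Ξ') - (frobSq (Ξ - Θs) + frobSq (Θ - Ξ))
      = -(2 * γ * ι * (1 - γ * (x ⬝ᵥ x) * ι)) * (w ⬝ᵥ w) + 4 * γ * ι * (1 - β) * (w ⬝ᵥ h)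
        - (2 * β - β ^ 2) * frobSq (Θbar - Ξ) - 2 * γ * β * ι * (e ⬝ᵥ h)
        - γ ^ 2 * β ^ 2 * ι ^ 2 * (x ⬝ᵥ x) * (e ⬝ᵥ e) := by
  have hgap : Θ - Ξ = (Θbar - Ξ) + (γ * β * ι) • vecMulVec e x := by rw [hΘbar]; abel
  have hw_eq : (Θ' - Θ) *ᵥ x + e = w := by
    have : Θ' - Θ = -β • (Θbar - Ξ) - (γ * β * ι) • vecMulVec e x := by
      rw [hΘ', hΘbar]; module
    rw [this, sub_mulVec, smul_mulVec, smul_mulVec, ← hh, vecMulVec_mulVec_eq_smul, hw]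
    module
  have hgap' : Θ' - Ξ' = (1 - β) • (Θbar - Ξ) + (γ * ι) • vecMulVec w x := by
    rw [hΞ', hw_eq, hΘ']; module
  have herr' : Ξ' - Θs = (Ξ - Θs) + (-(γ * ι)) • vecMulVec w x := by
    rw [hΞ', hw_eq]; module
  have herr_mulVec : (Ξ - Θs) *ᵥ x = w + (β - 1) • h := by
    rw [show Ξ - Θs = (Θ - Θs) - (Θ - Ξ) by abel, hgap, sub_mulVec, add_mulVec, smul_mulVec,
      ← he, ← hh, vecMulVec_mulVec_eq_smul, hw]
    module
  rw [herr', hgap', hgap, frobSq_add_smul_vecMulVec, frobSq_add_smul_vecMulVec,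
    frobSq_add_smul_vecMulVec, frobSq_smul, smul_mulVec, herr_mulVec, ← hh]
  simp only [dotProduct_add, dotProduct_smul, smul_eq_mul]
  ring

lemma quadratic_form_le {U : Matrix m n ℝ} {x : n → ℝ} {e h w : m → ℝ} {γ β ι α : ℝ}
    (hd : 0 < β * (2 - (1 + γ ^ 2) * β))
    (hα : α = 2 * (1 - γ) - γ * (2 - 3 * β) ^ 2 / (β * (2 - (1 + γ ^ 2) * β)))
    (hι : 0 ≤ ι) (hxι : (x ⬝ᵥ x) * ι ≤ 1)
    (hh : h = U *ᵥ x) (hw : w = (1 - γ * β * (x ⬝ᵥ x) * ι) • e - β • h) :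
    -(2 * γ * ι * (1 - γ * (x ⬝ᵥ x) * ι)) * (w ⬝ᵥ w) + 4 * γ * ι * (1 - β) * (w ⬝ᵥ h)
        - (2 * β - β ^ 2) * frobSq U - 2 * γ * β * ι * (e ⬝ᵥ h)
        - γ ^ 2 * β ^ 2 * ι ^ 2 * (x ⬝ᵥ x) * (e ⬝ᵥ e)
      ≤ -(γ * ι) * (α * (w ⬝ᵥ w) + 2 * β ^ 2 * (h ⬝ᵥ h)) := by
  set P := x ⬝ᵥ x
  set d := β * (2 - (1 + γ ^ 2) * β) with hd_def
  have hP : 0 ≤ P := dotProduct_self_nonneg x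
  have hPι : 0 ≤ P * ι := mul_nonneg hP hι
  have hαd : α * d = 2 * (1 - γ) * d - γ * (2 - 3 * β) ^ 2 := by
    rw [hα, sub_mul, div_mul_cancel₀ _ hd.ne']
  have hwh : w ⬝ᵥ h = (1 - γ * β * P * ι) * (e ⬝ᵥ h) - β * (h ⬝ᵥ h) := by
    simp only [hw, sub_dotProduct, smul_dotProduct, smul_eq_mul]
  have hhU : (h ⬝ᵥ h) * ι ≤ frobSq U := by
    have := mulVec_dotProduct_self_le_frobSq_mul U x
    rw [← hh] at this
    nlinarith [frobSq_nonneg U]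
  -- `‖U + (‖x‖² ι²) e xᵀ‖_F² ≥ 0` absorbs the `⟨e, h⟩` term left over after eliminating `⟨w, h⟩`.
  have hrank : 0 ≤ frobSq U + 2 * (P * ι ^ 2) * (e ⬝ᵥ h) + (P * ι ^ 2) ^ 2 * (e ⬝ᵥ e) * P := by
    have := frobSq_nonneg (U + (P * ι ^ 2) • vecMulVec e x)
    rwa [frobSq_add_smul_vecMulVec, ← hh] at this
  -- Multiplied by `d`, the gap between the two sides is a sum of the following nonnegative terms.
  have hcross := mul_le_mul_of_nonneg_left (two_mul_mul_dotProduct_le (γ * (2 - 3 * β)) d w h) hι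
  have hw_term : 0 ≤ γ ^ 2 * ι * (1 - P * ι) * (d * (w ⬝ᵥ w)) :=
    mul_nonneg (mul_nonneg (by positivity) (by linarith))
      (mul_nonneg hd.le (dotProduct_self_nonneg w))
  have hrank_term : 0 ≤ γ ^ 2 * β ^ 2 * d * (frobSq U + 2 * (P * ι ^ 2) * (e ⬝ᵥ h)
      + (P * ι ^ 2) ^ 2 * (e ⬝ᵥ e) * P) := mul_nonneg (by positivity) hrank
  have hhU_term : 0 ≤ d ^ 2 * (frobSq U - (h ⬝ᵥ h) * ι) :=
    mul_nonneg (by positivity) (by linarith)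
  have he_term : 0 ≤ γ ^ 2 * β ^ 2 * P * ι ^ 2 * (e ⬝ᵥ e) * d * ((1 - P * ι) * (1 + P * ι)) :=
    mul_nonneg (by have := dotProduct_self_nonneg e; positivity)
      (mul_nonneg (by linarith) (by linarith))
  have hαdw : γ * ι * (α * d) * (w ⬝ᵥ w)
      = γ * ι * (2 * (1 - γ) * d - γ * (2 - 3 * β) ^ 2) * (w ⬝ᵥ w) := by rw [hαd]
  have hdU : (2 * β - β ^ 2) * d * frobSq U = (d ^ 2 + γ ^ 2 * β ^ 2 * d) * frobSq U := by
    rw [hd_def]; ring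
  have hwhd : 2 * γ * β * ι * d * (w ⬝ᵥ h)
      = 2 * γ * β * ι * d * ((1 - γ * β * P * ι) * (e ⬝ᵥ h) - β * (h ⬝ᵥ h)) := by rw [hwh]
  rw [← mul_le_mul_iff_right₀ hd]
  linarith only [hcross, hw_term, hrank_term, hhU_term, he_term, hαdw, hdU, hwhd]

theorem lyapunov_step_le {Θ Ξ Θs Θbar Θ' Ξ' : Matrix m n ℝ} {x : n → ℝ} {e : m → ℝ}
    {γ β N α : ℝ} (hβ : 0 < β) (hγ0 : 0 < γ) (hγ : γ < √((2 - β) / β))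
    (hα_def : α = 2 * (1 - γ) - γ * (2 - 3 * β) ^ 2 / (β * (2 - (1 + γ ^ 2) * β)))
    (hα : 0 < α) (hxN : x ⬝ᵥ x ≤ N) (he : e = (Θ - Θs) *ᵥ x)
    (hΘbar : Θbar = Θ - (γ * β / N) • vecMulVec e x)
    (hΘ' : Θ' = Θbar - β • (Θbar - Ξ))
    (hΞ' : Ξ' = Ξ - (γ / N) • vecMulVec ((Θ' - Θ) *ᵥ x + e) x) :
    frobSq (Ξ' - Θs) + frobSq (Θ' - Ξ') - (frobSq (Ξ - Θs) + frobSq (Θ - Ξ))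
      ≤ -(γ * α * (1 - γ * β) ^ 2 * (2 / (2 + α))) * ((e ⬝ᵥ e) / N) := by
  have hN : 0 ≤ N := (dotProduct_self_nonneg x).trans hxN
  rw [div_eq_mul_inv] at hΘbar hΞ'
  set P := x ⬝ᵥ x
  set ι := N⁻¹
  have hι : 0 ≤ ι := inv_nonneg.mpr hN
  have hPι : P * ι ≤ 1 := div_le_one_of_le₀ hxN hN
  set h := (Θbar - Ξ) *ᵥ x
  set a := 1 - γ * β * P * ι
  set w := a • e - β • h
  have hdecrease := (lyapunov_diff_eq (h := h) (w := w) he hΘbar hΘ' hΞ' rfl rfl).trans_le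
    (quadratic_form_le (U := Θbar - Ξ) (e := e) (gain_margin_pos hβ hγ0.le hγ) hα_def hι
      hPι rfl rfl)
  have ha : (1 - γ * β) ^ 2 ≤ a ^ 2 := by
    have hγβ := gain_mul_lt_one hβ hγ0.le hγ
    have := mul_le_mul_of_nonneg_left hPι (mul_pos hγ0 hβ).le
    exact pow_le_pow_left₀ (by linarith) (by linarith) 2
  have hyoung := two_mul_dotProduct_add_smul_self_le α β w h
  rw [show w + β • h = a • e by module, smul_dotProduct, dotProduct_smul, smul_eq_mul,
    smul_eq_mul] at hyoung
  have hfactor := mul_le_mul_of_nonneg_left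
    (mul_le_mul_of_nonneg_right ha (dotProduct_self_nonneg e)) (by positivity : (0 : ℝ) ≤ 2 * α)
  have herror : 2 * α * (1 - γ * β) ^ 2 * (e ⬝ᵥ e)
      ≤ (2 + α) * (α * (w ⬝ᵥ w) + 2 * β ^ 2 * (h ⬝ᵥ h)) := by linarith
  have h2α : 0 < 2 + α := by linarith
  rw [show -(γ * α * (1 - γ * β) ^ 2 * (2 / (2 + α))) * ((e ⬝ᵥ e) / N)
      = -(γ * ι) * (2 * α * (1 - γ * β) ^ 2 * (e ⬝ᵥ e)) / (2 + α) by
    simp only [ι]; field_simp, le_div_iff₀ h2α]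
  linarith [mul_le_mul_of_nonneg_right hdecrease h2α.le,
    mul_le_mul_of_nonneg_left herror (mul_nonneg hγ0.le hι)]

end HighOrderTuner

open HighOrderTuner

theorem hot_lyapunov_decrease_general {m q : ℕ}
    (Θstar : Matrix (Fin m) (Fin q) ℝ) (μ γ β : ℝ)
    (hβ0 : 0 < β)
    (hγ0 : 0 < γ) (hγ : γ < Real.sqrt ((2 - β) / β))
    (hα : 0 < 2 * (1 - γ) - γ * (2 - 3 * β) ^ 2 / (β * (2 - (1 + γ ^ 2) * β)))
    (φ : ℕ → Fin q → ℝ)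
    (Θhat Ξhat Θbar : ℕ → Matrix (Fin m) (Fin q) ℝ)
    (N : ℕ → ℝ) (hN : ∀ k, N k = max μ (∑ j, φ k j ^ 2))
    (ε : ℕ → Fin m → ℝ) (hε : ∀ k, ε (k + 1) = (Θhat k - Θstar).mulVec (φ k))
    (hΘbar : ∀ k, Θbar k
      = Θhat k - (γ * β / N k) • Matrix.vecMulVec (ε (k + 1)) (φ k))
    (hΘ : ∀ k, Θhat (k + 1) = Θbar k - β • (Θbar k - Ξhat k))
    (hΞ : ∀ k, Ξhat (k + 1) = Ξhat k - (γ / N k) • Matrix.vecMulVec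
      ((Θhat (k + 1) - Θhat k).mulVec (φ k) + ε (k + 1)) (φ k)) :
    let α := 2 * (1 - γ) - γ * (2 - 3 * β) ^ 2 / (β * (2 - (1 + γ ^ 2) * β))
    ∀ k,
      ((∑ i, ∑ j, (Ξhat (k + 1) - Θstar) i j ^ 2)
          + ∑ i, ∑ j, (Θhat (k + 1) - Ξhat (k + 1)) i j ^ 2)
        - ((∑ i, ∑ j, (Ξhat k - Θstar) i j ^ 2)
          + ∑ i, ∑ j, (Θhat k - Ξhat k) i j ^ 2)
        ≤ -(γ * α * (1 - γ * β) ^ 2 * (2 / (2 + α)))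
            * ((∑ i, ε (k + 1) i ^ 2) / N k) ∧
      -(γ * α * (1 - γ * β) ^ 2 * (2 / (2 + α)))
          * ((∑ i, ε (k + 1) i ^ 2) / N k) ≤ 0 := by
  intro α k
  have hφN : φ k ⬝ᵥ φ k ≤ N k := by
    rw [hN k, dotProduct_self_eq_sum_sq]; exact le_max_right _ _
  have hNk : 0 ≤ N k := (dotProduct_self_nonneg _).trans hφN
  rw [← dotProduct_self_eq_sum_sq]
  refine ⟨lyapunov_step_le hβ0 hγ0 hγ rfl hα hφN (hε k) (hΘbar k) (hΘ k) (hΞ k), ?_⟩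
  rw [neg_mul, neg_nonpos]
  exact mul_nonneg (mul_nonneg (mul_nonneg (mul_nonneg hγ0.le hα.le) (sq_nonneg _))
    (div_nonneg zero_le_two (by linarith))) (div_nonneg (dotProduct_self_nonneg _) hNk)

/-- the high-order tuner Lyapunov function
    V_k = ‖Ξ̂_k − Θ_*‖_F² + ‖Θ̂_k − Ξ̂_k‖_F² satisfies
    V_{k+1} − V_k ≤ −γα(1−γβ)²(2/(2+α))‖ε_{k+1}‖²/N_k ≤ 0. -/
theorem hot_lyapunov_decrease {m q : ℕ}
    (Θstar : Matrix (Fin m) (Fin q) ℝ) (μ γ β : ℝ)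
    (hμ : 0 < μ) (hβ0 : 0 < β) (hβ2 : β < 2)
    (hγ0 : 0 < γ) (hγ : γ < Real.sqrt ((2 - β) / β))
    (hα : 0 < 2 * (1 - γ) - γ * (2 - 3 * β) ^ 2 / (β * (2 - (1 + γ ^ 2) * β)))
    (φ : ℕ → Fin q → ℝ)
    (Θhat Ξhat Θbar : ℕ → Matrix (Fin m) (Fin q) ℝ)
    (N : ℕ → ℝ) (hN : ∀ k, N k = max μ (∑ j, φ k j ^ 2))
    (ε : ℕ → Fin m → ℝ) (hε : ∀ k, ε (k + 1) = (Θhat k - Θstar).mulVec (φ k))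
    (hΘbar : ∀ k, Θbar k
      = Θhat k - (γ * β / N k) • Matrix.vecMulVec (ε (k + 1)) (φ k))
    (hΘ : ∀ k, Θhat (k + 1) = Θbar k - β • (Θbar k - Ξhat k))
    (hΞ : ∀ k, Ξhat (k + 1) = Ξhat k - (γ / N k) • Matrix.vecMulVec
      ((Θhat (k + 1) - Θhat k).mulVec (φ k) + ε (k + 1)) (φ k))
    (hinit : Ξhat 0 = Θhat 0) :
    let α := 2 * (1 - γ) - γ * (2 - 3 * β) ^ 2 / (β * (2 - (1 + γ ^ 2) * β))
    ∀ k,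
      ((∑ i, ∑ j, (Ξhat (k + 1) - Θstar) i j ^ 2)
          + ∑ i, ∑ j, (Θhat (k + 1) - Ξhat (k + 1)) i j ^ 2)
        - ((∑ i, ∑ j, (Ξhat k - Θstar) i j ^ 2)
          + ∑ i, ∑ j, (Θhat k - Ξhat k) i j ^ 2)
        ≤ -(γ * α * (1 - γ * β) ^ 2 * (2 / (2 + α)))
            * ((∑ i, ε (k + 1) i ^ 2) / N k) ∧
      -(γ * α * (1 - γ * β) ^ 2 * (2 / (2 + α)))
          * ((∑ i, ε (k + 1) i ^ 2) / N k) ≤ 0 :=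
  hot_lyapunov_decrease_general Θstar μ γ β hβ0 hγ0 hγ hα φ Θhat Ξhat Θbar N hN ε hε hΘbar hΘ hΞ
end

section
/- Fix Θ_* ∈ ℝ^{m×q}, μ > 0, and gains γ, β. Suppose the regressor is constant, φ_k = φ ∈ ℝ^q for all k, set N = max{μ, ‖φ‖²}, and run the high-order tuner: ε_{k+1} = (Θ̂_k − Θ_*)φ, Θ̄_k = Θ̂_k − (γβ/N) ε_{k+1} φ^⊤, Θ̂_{k+1} = Θ̄_k − β(Θ̄_k − Ξ̂_k), Ξ̂_{k+1} = Ξ̂_k − (γ/N)(Θ̂_{k+1} − Θ_*)φ φ^⊤, with Ξ̂_0 = Θ̂_0. Then for all k ≥ 1 the iterates satisfy Nesterov's recursion Θ̂_{k+1} = Θ̂_k + β̄(Θ̂_k − Θ̂_{k−1}) − γ̄ ∇f̄(Θ̂_k + β̄(Θ̂_k − Θ̂_{k−1})), where β̄ = 1 − β, γ̄ = γβ, and ∇f̄(Θ) = (1/N)(Θ − Θ_*)φ φ^⊤. -/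
open scoped BigOperators

lemma vecMulVec_mulVec_affine {m q : ℕ} (φ : Fin q → ℝ) (c : ℝ)
    (A B : Matrix (Fin m) (Fin q) ℝ) :
    Matrix.vecMulVec ((A + c • (A - B)).mulVec φ) φ
      = Matrix.vecMulVec (A.mulVec φ) φ
        + c • (Matrix.vecMulVec (A.mulVec φ) φ - Matrix.vecMulVec (B.mulVec φ) φ) := by
  ext i j
  simp only [Matrix.vecMulVec_apply, Matrix.mulVec, dotProduct,
    Matrix.add_apply, Matrix.sub_apply, Matrix.smul_apply, smul_eq_mul,
    Pi.add_apply, Pi.sub_apply, Pi.smul_apply]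
  have h : ∀ x ∈ Finset.univ, (A i x + c * (A i x - B i x)) * φ x
      = A i x * φ x + (c * (A i x * φ x) - c * (B i x * φ x)) := fun x _ => by ring
  rw [Finset.sum_congr rfl h, Finset.sum_add_distrib, Finset.sum_sub_distrib,
    ← Finset.mul_sum, ← Finset.mul_sum]
  ring

/-- with a constant regressor, the high-order tuner iterates
    satisfy Nesterov's recursion with β̄ = 1 − β, γ̄ = γβ and
    ∇f̄(Θ) = (1/N)(Θ − Θ_*)φφ^⊤. -/
theorem hot_reduces_to_nesterov {m q : ℕ}
    (Θstar : Matrix (Fin m) (Fin q) ℝ) (μ γ β : ℝ) (hμ : 0 < μ)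
    (φ : Fin q → ℝ)
    (Θhat Ξhat Θbar : ℕ → Matrix (Fin m) (Fin q) ℝ)
    (ε : ℕ → Fin m → ℝ)
    (N : ℝ) (hN : N = max μ (∑ j, φ j ^ 2))
    (hε : ∀ k, ε (k + 1) = (Θhat k - Θstar).mulVec φ)
    (hΘbar : ∀ k, Θbar k = Θhat k - (γ * β / N) • Matrix.vecMulVec (ε (k + 1)) φ)
    (hΘ : ∀ k, Θhat (k + 1) = Θbar k - β • (Θbar k - Ξhat k))
    (hΞ : ∀ k, Ξhat (k + 1)
      = Ξhat k - (γ / N) • Matrix.vecMulVec ((Θhat (k + 1) - Θstar).mulVec φ) φ)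
    (hinit : Ξhat 0 = Θhat 0) :
    ∀ k, 1 ≤ k →
      Θhat (k + 1)
        = Θhat k + (1 - β) • (Θhat k - Θhat (k - 1))
          - (γ * β) • ((1 / N) • Matrix.vecMulVec
              ((Θhat k + (1 - β) • (Θhat k - Θhat (k - 1)) - Θstar).mulVec φ) φ) := by
  intro k hk
  obtain ⟨j, rfl⟩ : ∃ j, k = j + 1 := ⟨k - 1, (Nat.succ_pred_eq_of_pos hk).symm⟩
  simp only [Nat.add_sub_cancel]
  set Ga := Matrix.vecMulVec ((Θhat j - Θstar).mulVec φ) φ with hGa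
  set Gb := Matrix.vecMulVec ((Θhat (j + 1) - Θstar).mulVec φ) φ with hGb
  have hbar1 : Θbar j = Θhat j - (γ * β / N) • Ga := by rw [hΘbar j, hε j]
  have hbar2 : Θbar (j + 1) = Θhat (j + 1) - (γ * β / N) • Gb := by
    rw [hΘbar (j + 1), hε (j + 1)]
  have hGY : (Θhat (j + 1) + (1 - β) • (Θhat (j + 1) - Θhat j) - Θstar)
      = (Θhat (j + 1) - Θstar) + (1 - β) • ((Θhat (j + 1) - Θstar) - (Θhat j - Θstar)) := by
    module
  have hgoalG : Matrix.vecMulVec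
      ((Θhat (j + 1) + (1 - β) • (Θhat (j + 1) - Θhat j) - Θstar).mulVec φ) φ
      = Gb + (1 - β) • (Gb - Ga) := by
    rw [hGY, vecMulVec_mulVec_affine]
  have eΞ : β • Ξhat j
      = Θhat (j + 1) - (1 - β) • (Θhat j - (γ * β / N) • Ga) := by
    rw [hΘ j, hbar1]; module
  rw [hgoalG, hΘ (j + 1), hΞ j, hbar2, ← hGb]
  linear_combination (norm := module) eΞ
end

section
/- Let A_m ∈ ℝ^{n×n}, B ∈ ℝ^{n×m}, and let P, Q ∈ ℝ^{n×n} be symmetric positive definite with A_m^⊤ P A_m − P = −Q. Suppose x' = A_m x + B r + B ε with ‖r‖ ≤ r_max, x ≠ 0, and define V(x) = x^⊤ P x. If for some constant c₁ > 0 we have λ_min(Q) − 2‖A_m^⊤ P B‖₂ (r_max + ‖ε‖)/‖x‖ − 2‖B^⊤ P B‖₂ (r_max² + ‖ε‖²)/‖x‖² ≥ c₁, then V(x') − V(x) ≤ −(c₁/λ_max(P)) V(x). -/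
/-!
With `v = r + ε` we have `x' = A_m x + B v`, and the Lyapunov equation turns the increment of
`V(x) = xᵀPx` into `-xᵀQx + 2 xᵀ(A_mᵀPB)v + vᵀ(BᵀPB)v`. Bounding `xᵀQx` from below by
`λ_min(Q)‖x‖²`, the other two terms by operator norms, and
`‖v‖² ≤ (r_max + ‖ε‖)² ≤ 2(r_max² + ‖ε‖²)`, the hypothesis gives `V(x') - V(x) ≤ -c₁‖x‖²`;
finally `V(x) ≤ λ_max(P)‖x‖²`.
-/

open scoped BigOperators
open Matrix

/-- The spectral (L2 operator) norm of a real matrix. -/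
noncomputable def specNorm {a b : ℕ} (M : Matrix (Fin a) (Fin b) ℝ) : ℝ :=
  ‖LinearMap.toContinuousLinearMap (Matrix.toEuclideanLin M)‖

lemma norm_toLp_two_eq_sqrt_sum_sq {ι : Type*} [Fintype ι] (y : ι → ℝ) :
    ‖WithLp.toLp 2 y‖ = √(∑ i, y i ^ 2) := by
  simp [EuclideanSpace.norm_eq, sq_abs]

lemma sqrt_sum_sq_add_le {ι : Type*} [Fintype ι] (y z : ι → ℝ) :
    √(∑ i, (y + z) i ^ 2) ≤ √(∑ i, y i ^ 2) + √(∑ i, z i ^ 2) := by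
  simpa only [← norm_toLp_two_eq_sqrt_sum_sq, WithLp.toLp_add]
    using norm_add_le (WithLp.toLp 2 y) (WithLp.toLp 2 z)

lemma sqrt_sum_sq_pos {ι : Type*} [Fintype ι] {y : ι → ℝ} (hy : y ≠ 0) :
    0 < √(∑ i, y i ^ 2) := by
  rw [← norm_toLp_two_eq_sqrt_sum_sq, norm_pos_iff]
  simpa using hy

lemma specNorm_nonneg {a b : ℕ} (M : Matrix (Fin a) (Fin b) ℝ) : 0 ≤ specNorm M :=
  norm_nonneg _

lemma dotProduct_mulVec_le_specNorm {a b : ℕ} (M : Matrix (Fin a) (Fin b) ℝ)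
    (v : Fin a → ℝ) (w : Fin b → ℝ) :
    v ⬝ᵥ M *ᵥ w ≤ specNorm M * √(∑ i, v i ^ 2) * √(∑ i, w i ^ 2) := by
  have hinner :
      v ⬝ᵥ M *ᵥ w = inner ℝ (WithLp.toLp 2 v) (toEuclideanLin M (WithLp.toLp 2 w)) := by
    simp [PiLp.inner_apply, dotProduct, mul_comm]
  rw [hinner, ← norm_toLp_two_eq_sqrt_sum_sq, ← norm_toLp_two_eq_sqrt_sum_sq]
  calc _ ≤ ‖WithLp.toLp 2 v‖ * ‖toEuclideanLin M (WithLp.toLp 2 w)‖ :=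
        real_inner_le_norm _ _
    _ ≤ ‖WithLp.toLp 2 v‖ * (specNorm M * ‖WithLp.toLp 2 w‖) := by
      gcongr
      exact (LinearMap.toContinuousLinearMap (toEuclideanLin M)).le_opNorm _
    _ = _ := by ring

namespace Matrix.IsHermitian

variable {ι : Type*} [Fintype ι] [DecidableEq ι] {M : Matrix ι ι ℝ} (hM : M.IsHermitian)
include hM

lemma sum_sq_star_eigenvectorUnitary_mulVec (y : ι → ℝ) :
    ∑ i, (star (hM.eigenvectorUnitary : Matrix ι ι ℝ) *ᵥ y) i ^ 2 = ∑ i, y i ^ 2 := by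
  set U : Matrix ι ι ℝ := ↑hM.eigenvectorUnitary
  have hUU : U * Uᵀ = 1 := by
    simpa [star_eq_conjTranspose] using mem_unitaryGroup_iff.mp hM.eigenvectorUnitary.2
  have h : (star U *ᵥ y) ⬝ᵥ (star U *ᵥ y) = y ⬝ᵥ y := by
    rw [dotProduct_mulVec, vecMul_mulVec, ← mulVec_transpose, star_eq_conjTranspose,
      conjTranspose_eq_transpose_of_trivial, transpose_transpose, hUU, transpose_one, one_mulVec]
  simpa [dotProduct, sq] using h

lemma dotProduct_mulVec_self_eq_sum_eigenvalues (y : ι → ℝ) :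
    y ⬝ᵥ M *ᵥ y =
      ∑ i, hM.eigenvalues i * (star (hM.eigenvectorUnitary : Matrix ι ι ℝ) *ᵥ y) i ^ 2 := by
  set U : Matrix ι ι ℝ := ↑hM.eigenvectorUnitary
  have hM' : M = U * diagonal hM.eigenvalues * star U := by simpa using hM.spectral_theorem
  have hUt : Uᵀ = star U := by rw [star_eq_conjTranspose, conjTranspose_eq_transpose_of_trivial]
  conv_lhs =>
    rw [hM', ← mulVec_mulVec, ← mulVec_mulVec, dotProduct_mulVec, ← mulVec_transpose, hUt]
  simp only [mulVec_diagonal, dotProduct, sq]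
  exact Finset.sum_congr rfl fun i _ => by ring

lemma iInf_eigenvalues_mul_le (y : ι → ℝ) :
    (⨅ i, hM.eigenvalues i) * ∑ i, y i ^ 2 ≤ y ⬝ᵥ M *ᵥ y := by
  rw [hM.dotProduct_mulVec_self_eq_sum_eigenvalues, ← hM.sum_sq_star_eigenvectorUnitary_mulVec,
    Finset.mul_sum]
  gcongr with i
  exact ciInf_le (Finite.bddBelow_range _) i

lemma le_iSup_eigenvalues_mul (y : ι → ℝ) :
    y ⬝ᵥ M *ᵥ y ≤ (⨆ i, hM.eigenvalues i) * ∑ i, y i ^ 2 := by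
  rw [hM.dotProduct_mulVec_self_eq_sum_eigenvalues, ← hM.sum_sq_star_eigenvectorUnitary_mulVec,
    Finset.mul_sum]
  gcongr with i
  exact le_ciSup (Finite.bddAbove_range _) i

end Matrix.IsHermitian

lemma Matrix.PosDef.iSup_eigenvalues_pos {ι : Type*} [Fintype ι] [DecidableEq ι] [Nonempty ι]
    {M : Matrix ι ι ℝ} (hM : M.PosDef) : 0 < ⨆ i, hM.1.eigenvalues i := by
  obtain ⟨i⟩ := ‹Nonempty ι›
  exact (hM.eigenvalues_pos i).trans_le (le_ciSup (Finite.bddAbove_range _) i)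

lemma dotProduct_mulVec_mulVec_mulVec {R ι κ μ : Type*} [CommRing R] [Fintype ι] [Fintype κ]
    [Fintype μ] (A : Matrix ι κ R) (P : Matrix ι ι R) (B : Matrix ι μ R)
    (x : κ → R) (v : μ → R) :
    (A *ᵥ x) ⬝ᵥ P *ᵥ (B *ᵥ v) = x ⬝ᵥ (Aᵀ * P * B) *ᵥ v := by
  rw [dotProduct_comm, dotProduct_mulVec, ← mulVec_transpose, dotProduct_comm, mulVec_mulVec,
    mulVec_mulVec, Matrix.mul_assoc]

lemma lyapunov_increment_eq {R ι κ : Type*} [CommRing R] [Fintype ι] [Fintype κ]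
    {A P Q : Matrix ι ι R} (B : Matrix ι κ R) (hP : Pᵀ = P) (hLyap : Aᵀ * P * A - P = -Q)
    (x : ι → R) (v : κ → R) :
    (A *ᵥ x + B *ᵥ v) ⬝ᵥ P *ᵥ (A *ᵥ x + B *ᵥ v) - x ⬝ᵥ P *ᵥ x
      = -(x ⬝ᵥ Q *ᵥ x) + 2 * (x ⬝ᵥ (Aᵀ * P * B) *ᵥ v)
        + v ⬝ᵥ (Bᵀ * P * B) *ᵥ v := by
  have hQ : x ⬝ᵥ Q *ᵥ x = x ⬝ᵥ P *ᵥ x - (A *ᵥ x) ⬝ᵥ P *ᵥ (A *ᵥ x) := by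
    rw [dotProduct_mulVec_mulVec_mulVec, ← dotProduct_sub, ← sub_mulVec, ← neg_sub, hLyap,
      neg_neg]
  have hswap : (B *ᵥ v) ⬝ᵥ P *ᵥ (A *ᵥ x) = (A *ᵥ x) ⬝ᵥ P *ᵥ (B *ᵥ v) := by
    rw [dotProduct_mulVec, ← mulVec_transpose, hP, dotProduct_comm]
  rw [hQ, mulVec_add, dotProduct_add, add_dotProduct, add_dotProduct, hswap,
    dotProduct_mulVec_mulVec_mulVec A P B, dotProduct_mulVec_mulVec_mulVec B P B]
  ring

lemma lyapunov_increment_le {n m : ℕ} {A P Q : Matrix (Fin n) (Fin n) ℝ}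
    (B : Matrix (Fin n) (Fin m) ℝ) (hP : P.IsHermitian) (hQ : Q.IsHermitian)
    (hLyap : Aᵀ * P * A - P = -Q) (x : Fin n → ℝ) (v : Fin m → ℝ) :
    (A *ᵥ x + B *ᵥ v) ⬝ᵥ P *ᵥ (A *ᵥ x + B *ᵥ v) - x ⬝ᵥ P *ᵥ x
      ≤ -(⨅ i, hQ.eigenvalues i) * ∑ i, x i ^ 2
        + 2 * specNorm (Aᵀ * P * B) * √(∑ i, x i ^ 2) * √(∑ i, v i ^ 2)
        + specNorm (Bᵀ * P * B) * √(∑ i, v i ^ 2) ^ 2 := by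
  have hPt : Pᵀ = P := (conjTranspose_eq_transpose_of_trivial P).symm.trans hP
  rw [lyapunov_increment_eq B hPt hLyap]
  have hQx := hQ.iInf_eigenvalues_mul_le x
  have hcross := dotProduct_mulVec_le_specNorm (Aᵀ * P * B) x v
  have hquad := dotProduct_mulVec_le_specNorm (Bᵀ * P * B) v v
  linarith

/-- one-step decrease of the Lyapunov function V(x) = x^⊤Px
    along the perturbed stable dynamics x' = A_m x + B r + B ε, under the
    stated lower bound involving λ_min(Q). -/
theorem lyapunov_one_step_decrease {n m : ℕ}
    (Am : Matrix (Fin n) (Fin n) ℝ) (B : Matrix (Fin n) (Fin m) ℝ)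
    (P Q : Matrix (Fin n) (Fin n) ℝ) (hP : P.PosDef) (hQ : Q.PosDef)
    (hLyap : Amᵀ * P * Am - P = -Q)
    (x : Fin n → ℝ) (r ε : Fin m → ℝ) (rmax c₁ : ℝ)
    (hr : Real.sqrt (∑ i, r i ^ 2) ≤ rmax)
    (hx : x ≠ 0) (hc₁ : 0 < c₁)
    (hcond : (⨅ i, hQ.1.eigenvalues i)
        - 2 * specNorm (Amᵀ * P * B)
            * (rmax + Real.sqrt (∑ i, ε i ^ 2)) / Real.sqrt (∑ i, x i ^ 2)
        - 2 * specNorm (Bᵀ * P * B)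
            * (rmax ^ 2 + (Real.sqrt (∑ i, ε i ^ 2)) ^ 2)
            / (Real.sqrt (∑ i, x i ^ 2)) ^ 2
      ≥ c₁) :
    let x' := Am.mulVec x + B.mulVec r + B.mulVec ε
    x' ⬝ᵥ P.mulVec x' - x ⬝ᵥ P.mulVec x
      ≤ -(c₁ / ⨆ i, hP.1.eigenvalues i) * (x ⬝ᵥ P.mulVec x) := by
  intro x'
  have hx' : x' = Am *ᵥ x + B *ᵥ (r + ε) := by rw [mulVec_add, ← add_assoc]
  have hincr := lyapunov_increment_le B hP.1 hQ.1 hLyap x (r + ε)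
  have hV := hP.1.le_iSup_eigenvalues_mul x
  rw [← hx'] at hincr
  obtain ⟨i₀, -⟩ := Function.ne_iff.mp hx
  have : Nonempty (Fin n) := ⟨i₀⟩
  set ξ := √(∑ i, x i ^ 2)
  set ρ := √(∑ i, ε i ^ 2)
  set ν := √(∑ i, (r + ε) i ^ 2)
  have hξ : 0 < ξ := sqrt_sum_sq_pos hx
  have hξsq : ξ ^ 2 = ∑ i, x i ^ 2 := Real.sq_sqrt (by positivity)
  rw [← hξsq] at hincr hV
  have hν : ν ≤ rmax + ρ := (sqrt_sum_sq_add_le r ε).trans (by gcongr)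
  have hcross :
      specNorm (Amᵀ * P * B) * ξ * ν ≤ specNorm (Amᵀ * P * B) * ξ * (rmax + ρ) :=
    mul_le_mul_of_nonneg_left hν (mul_nonneg (specNorm_nonneg _) hξ.le)
  have hquad :
      specNorm (Bᵀ * P * B) * ν ^ 2 ≤ 2 * specNorm (Bᵀ * P * B) * (rmax ^ 2 + ρ ^ 2) := by
    have := pow_le_pow_left₀ (Real.sqrt_nonneg _) hν 2
    nlinarith [specNorm_nonneg (Bᵀ * P * B), sq_nonneg (rmax - ρ)]
  field_simp at hcond
  calc _ ≤ -c₁ * ξ ^ 2 := by linarith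
    _ ≤ -(c₁ / ⨆ i, hP.1.eigenvalues i) * (x ⬝ᵥ P.mulVec x) := by
      rw [neg_mul, neg_mul, neg_le_neg_iff, div_mul_eq_mul_div,
        div_le_iff₀ hP.iSup_eigenvalues_pos]
      linarith [mul_le_mul_of_nonneg_left hV hc₁.le]
end

section
/- Fix Θ_* ∈ ℝ^{m×q}, μ > 0, 0 < β < 2, and γ > 0. For λ ∈ [0,1] define a(γ,β,λ) = γ(2(1−γλ)(1−γβλ)² + γβ²λ), b(γ,β,λ) = γ(2β(1−γλ)(1−γβλ) − β + 2(1−β)(1−γβλ)), and c(γ,β,λ) = β(2γβ(1−γλ) + 2 − β + 4γ(1−β)). Let Θ̂, Ξ̂ ∈ ℝ^{m×q} and φ ∈ ℝ^q, set N = max{μ, ‖φ‖²}, λ = ‖φ‖²/N ∈ [0,1], ε = (Θ̂ − Θ_*)φ, and perform one high-order tuner step: Θ̄ = Θ̂ − (γβ/N) ε φ^⊤, Θ̂' = Θ̄ − β(Θ̄ − Ξ̂), Ξ̂' = Ξ̂ − (γ/N)((Θ̂' − Θ̂)φ + ε)φ^⊤. If c(γ,β,λ) > 0, then with V = ‖Ξ̂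 − Θ_*‖_F² + ‖Θ̂ − Ξ̂‖_F² and V' = ‖Ξ̂' − Θ_*‖_F² + ‖Θ̂' − Ξ̂'‖_F², one has V' − V ≤ −(a(γ,β,λ) − b(γ,β,λ)²/c(γ,β,λ)) ‖ε‖²/N. -/
/-!
Write `D = Θ̂ - Ξ̂`, `v = D φ` and `ε' = κ ε - β v` for the prediction error of `Θ̂'`. Both new
errors are rank-one perturbations of the old ones:
`Ξ̂' - Θ_* = (Ξ̂ - Θ_*) - (γ/N) ε' φᵀ` and `Θ̂' - Ξ̂' = (1 - β) D + (γ/N) (ε' - β(1 - β) ε) φᵀ`.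
Expanding the Frobenius norms gives `N (V' - V) = -β(2 - β) N ‖D‖² + γ F(‖ε‖², ⟨ε, v⟩, ‖v‖²)`
with `F` linear in its three arguments. For `λ > 0`, with `‖v‖² ≤ λ N ‖D‖²` and Cauchy–Schwarz
`⟨ε, v⟩² ≤ ‖ε‖² ‖v‖²` the claim becomes the negative semidefiniteness of a binary quadratic form, whose discriminant
factors as `4 λ c γ² β (2 - β) (1 - λ) (2(γβλ)² - 4γβλ + 2 - β)² ≥ 0`.
-/

open Matrix

theorem Matrix.dotProduct_sq_le {n : Type*} [Fintype n] (x y : n → ℝ) :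
    (x ⬝ᵥ y) ^ 2 ≤ (x ⬝ᵥ x) * (y ⬝ᵥ y) := by
  simpa only [dotProduct, ← sq] using Finset.sum_mul_sq_le_sq_mul_sq Finset.univ x y

theorem Matrix.mulVec_dotProduct_self_le {m n : Type*} [Fintype m] [Fintype n]
    (M : Matrix m n ℝ) (φ : n → ℝ) :
    M *ᵥ φ ⬝ᵥ M *ᵥ φ ≤ (∑ i, ∑ j, M i j ^ 2) * (φ ⬝ᵥ φ) := by
  rw [dotProduct, Finset.sum_mul]
  refine Finset.sum_le_sum fun i _ => ?_
  simpa only [mulVec, ← sq, dotProduct] using dotProduct_sq_le (M i) φ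

theorem Matrix.sum_sq_smul {m n : Type*} [Fintype m] [Fintype n] (r : ℝ) (M : Matrix m n ℝ) :
    ∑ i, ∑ j, (r • M) i j ^ 2 = r ^ 2 * ∑ i, ∑ j, M i j ^ 2 := by
  simp only [smul_apply, smul_eq_mul, mul_pow, Finset.mul_sum]

theorem Matrix.sum_sq_add_smul_vecMulVec {m n : Type*} [Fintype m] [Fintype n]
    (M : Matrix m n ℝ) (t : ℝ) (x : m → ℝ) (φ : n → ℝ) :
    ∑ i, ∑ j, (M + t • vecMulVec x φ) i j ^ 2
      = ∑ i, ∑ j, M i j ^ 2 + 2 * t * (x ⬝ᵥ M *ᵥ φ) + t ^ 2 * (x ⬝ᵥ x) * (φ ⬝ᵥ φ) := by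
  simp only [dotProduct, mulVec]
  rw [mul_assoc (t ^ 2), Finset.sum_mul_sum]
  simp only [Finset.mul_sum, ← Finset.sum_add_distrib]
  exact Finset.sum_congr rfl fun i _ => Finset.sum_congr rfl fun j _ => by
    simp only [add_apply, smul_apply, vecMulVec_apply, smul_eq_mul]; ring

theorem quadratic_form_nonpos {A B C X P Y : ℝ} (hA : A ≤ 0) (hC : C ≤ 0)
    (hdisc : B ^ 2 ≤ 4 * A * C) (hX : 0 ≤ X) (hY : 0 ≤ Y) (hP : P ^ 2 ≤ X * Y) :
    A * X + B * P + C * Y ≤ 0 := by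
  have hAX : A * X ≤ 0 := mul_nonpos_of_nonpos_of_nonneg hA hX
  have hCY : C * Y ≤ 0 := mul_nonpos_of_nonpos_of_nonneg hC hY
  have hsq : (B * P) ^ 2 ≤ (-(A * X + C * Y)) ^ 2 :=
    calc (B * P) ^ 2 = B ^ 2 * P ^ 2 := mul_pow B P 2
      _ ≤ 4 * A * C * (X * Y) :=
        mul_le_mul hdisc hP (sq_nonneg P) ((sq_nonneg B).trans hdisc)
      _ ≤ (-(A * X + C * Y)) ^ 2 := by nlinarith [sq_nonneg (A * X - C * Y)]
  linarith [le_of_sq_le_sq hsq (by linarith)]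

namespace HighOrderTuner

variable (γ β lam : ℝ)

def a : ℝ := γ * (2 * (1 - γ * lam) * (1 - γ * β * lam) ^ 2 + γ * β ^ 2 * lam)

def b : ℝ :=
  γ * (2 * β * (1 - γ * lam) * (1 - γ * β * lam) - β + 2 * (1 - β) * (1 - γ * β * lam))

def c : ℝ := β * (2 * γ * β * (1 - γ * lam) + 2 - β + 4 * γ * (1 - β))

/-- `κ` in `(Θ̂' - Θ_*) φ = κ ε - β (Θ̂ - Ξ̂) φ`. -/
def errorGain : ℝ := 1 - γ * β * lam * (1 - β)

/-- `-2⟨ε', ε - v⟩ + γλ‖ε'‖² + 2(1 - β)⟨ε'', v⟩ + γλ‖ε''‖²` with `ε' = κ ε - β v` and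
`ε'' = ε' - β(1 - β) ε`, written in the coordinates `X = ‖ε‖²`, `P = ⟨ε, v⟩`, `Y = ‖v‖²`. -/
def decrementForm (X P Y : ℝ) : ℝ :=
  let κ := errorGain γ β lam
  let κ' := κ - β * (1 - β)
  2 * ((1 - β) * (κ' * P - β * Y) - (κ * X - (κ + β) * P + β * Y))
    + γ * lam * (κ ^ 2 * X - 2 * κ * β * P + β ^ 2 * Y)
    + γ * lam * (κ' ^ 2 * X - 2 * κ' * β * P + β ^ 2 * Y)

variable {γ β lam}

theorem decrementForm_le {X P Y : ℝ} (hβ0 : 0 < β) (hβ2 : β < 2) (hlam0 : 0 < lam)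
    (hlam1 : lam ≤ 1) (hc : 0 < c γ β lam) (hX : 0 ≤ X) (hY : 0 ≤ Y) (hP : P ^ 2 ≤ X * Y) :
    lam * γ * decrementForm γ β lam X P Y - β * (2 - β) * Y
      ≤ -(lam * (a γ β lam - b γ β lam ^ 2 / c γ β lam)) * X := by
  set F := decrementForm γ β lam
  set A := lam * (c γ β lam * (a γ β lam + γ * F 1 0 0) - b γ β lam ^ 2)
  set B := lam * c γ β lam * γ * F 0 1 0
  set C := c γ β lam * (lam * γ * F 0 0 1 - β * (2 - β))
  have hC_eq : C = -c γ β lam * (lam * c γ β lam + β * (2 - β) * (1 - lam)) := by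
    simp only [C, F, decrementForm, errorGain, c]; ring
  have hdisc_eq : 4 * A * C - B ^ 2 = 4 * lam * c γ β lam * γ ^ 2 * β * (2 - β) * (1 - lam)
      * (2 * (γ * β * lam) ^ 2 - 4 * (γ * β * lam) + (2 - β)) ^ 2 := by
    simp only [A, B, C, F, decrementForm, errorGain, a, b, c]; ring
  have h2β := sub_pos.2 hβ2
  have h1lam := sub_nonneg.2 hlam1
  have hC : C < 0 := by
    rw [hC_eq]
    have : 0 < lam * c γ β lam + β * (2 - β) * (1 - lam) := by positivity
    nlinarith
  have hdisc : B ^ 2 ≤ 4 * A * C := by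
    rw [← sub_nonneg, hdisc_eq]
    positivity
  have hA : A ≤ 0 := nonpos_of_mul_nonneg_left (by nlinarith [sq_nonneg B]) hC
  have hcombo : c γ β lam * (lam * γ * F X P Y - β * (2 - β) * Y
      + lam * (a γ β lam - b γ β lam ^ 2 / c γ β lam) * X) = A * X + B * P + C * Y := by
    simp only [A, B, C, F, decrementForm]
    field_simp
    ring
  have := nonpos_of_mul_nonpos_right
    (hcombo ▸ quadratic_form_nonpos hA hC.le hdisc hX hY hP) hc
  linarith

theorem lyapunov_difference_le {X P Y D N : ℝ} (hβ0 : 0 < β) (hβ2 : β < 2)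
    (hN : 0 < N) (hlam0 : 0 ≤ lam) (hlam1 : lam ≤ 1) (hc : 0 < c γ β lam) (hX : 0 ≤ X)
    (hY : 0 ≤ Y) (hD : 0 ≤ D) (hP : P ^ 2 ≤ X * Y) (hYD : Y ≤ D * (lam * N)) :
    -(β * (2 - β)) * D + γ * decrementForm γ β lam X P Y / N
      ≤ -(a γ β lam - b γ β lam ^ 2 / c γ β lam) * (X / N) := by
  have h2β := sub_pos.2 hβ2
  rcases hlam0.eq_or_lt with rfl | hlam0
  · have hY0 : Y = 0 := by linarith
    have hP0 : P = 0 := by nlinarith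
    subst hY0 hP0
    have hform : γ * decrementForm γ β 0 X 0 0 = -a γ β 0 * X := by
      simp only [decrementForm, errorGain, a]; ring
    have : 0 ≤ b γ β 0 ^ 2 / c γ β 0 * (X / N) := by positivity
    rw [hform, mul_div_assoc]
    nlinarith [mul_nonneg (mul_pos hβ0 h2β).le hD]
  · have key := decrementForm_le (γ := γ) hβ0 hβ2 hlam0 hlam1 hc hX hY hP
    have hYD' := mul_le_mul_of_nonneg_left hYD (mul_pos hβ0 h2β).le
    rw [← mul_le_mul_iff_of_pos_left (mul_pos hlam0 hN)]
    have hlhs : lam * N * (-(β * (2 - β)) * D + γ * decrementForm γ β lam X P Y / N)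
        = lam * γ * decrementForm γ β lam X P Y - β * (2 - β) * (D * (lam * N)) := by
      field_simp; ring
    have hrhs : lam * N * (-(a γ β lam - b γ β lam ^ 2 / c γ β lam) * (X / N))
        = -(lam * (a γ β lam - b γ β lam ^ 2 / c γ β lam)) * X := by
      field_simp
    rw [hlhs, hrhs]
    linarith

theorem lyapunov_difference_eq {m n : Type*} [Fintype m] [Fintype n]
    (Θstar Θhat Ξhat : Matrix m n ℝ) (φ : n → ℝ) (γ β N lam : ℝ) (hN : N ≠ 0)
    (hφ : φ ⬝ᵥ φ = lam * N) :
    let ε := (Θhat - Θstar) *ᵥ φ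
    let v := (Θhat - Ξhat) *ᵥ φ
    let Θbar := Θhat - (γ * β / N) • vecMulVec ε φ
    let Θhat' := Θbar - β • (Θbar - Ξhat)
    let Ξhat' := Ξhat - (γ / N) • vecMulVec ((Θhat' - Θhat) *ᵥ φ + ε) φ
    ((∑ i, ∑ j, (Ξhat' - Θstar) i j ^ 2) + ∑ i, ∑ j, (Θhat' - Ξhat') i j ^ 2)
        - ((∑ i, ∑ j, (Ξhat - Θstar) i j ^ 2) + ∑ i, ∑ j, (Θhat - Ξhat) i j ^ 2)
      = -(β * (2 - β)) * ∑ i, ∑ j, (Θhat - Ξhat) i j ^ 2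
        + γ * decrementForm γ β lam (ε ⬝ᵥ ε) (ε ⬝ᵥ v) (v ⬝ᵥ v) / N := by
  intro ε v Θbar Θhat' Ξhat'
  set D := Θhat - Ξhat
  set κ := errorGain γ β lam
  have hε : (Ξhat - Θstar) *ᵥ φ = ε - v := by
    simp only [ε, v, ← sub_mulVec]; congr 1; abel
  have hstep : Θhat' - Θhat = (-β) • D - ((1 - β) * (γ * β / N)) • vecMulVec ε φ := by
    simp only [Θhat', Θbar, D]; module
  have hnew : (Θhat' - Θhat) *ᵥ φ + ε = κ • ε - β • v := by
    rw [hstep, sub_mulVec, smul_mulVec, smul_mulVec, vecMulVec_mulVec,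
      op_smul_eq_smul, hφ, smul_smul]
    match_scalars
    · ring
    · simp only [κ, errorGain]; field_simp; ring
  have hΞ : Ξhat' - Θstar = (Ξhat - Θstar) + (-(γ / N)) • vecMulVec (κ • ε - β • v) φ := by
    simp only [Ξhat', hnew]; module
  have hD : Θhat' - Ξhat'
      = (1 - β) • D + (γ / N) • vecMulVec ((κ - β * (1 - β)) • ε - β • v) φ := by
    rw [← sub_add_sub_cancel Θhat' Θhat, hstep]
    simp only [Ξhat', hnew, D, sub_vecMulVec, smul_vecMulVec]
    module
  rw [hΞ, hD, sum_sq_add_smul_vecMulVec, sum_sq_add_smul_vecMulVec, sum_sq_smul, smul_mulVec,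
    hε, hφ]
  simp only [dotProduct_sub, sub_dotProduct, dotProduct_smul, smul_dotProduct, smul_eq_mul,
    dotProduct_comm v ε, decrementForm]
  field_simp
  ring

end HighOrderTuner

open HighOrderTuner

theorem hot_one_step_refined_decrease_general {m q : ℕ}
    (Θstar Θhat Ξhat : Matrix (Fin m) (Fin q) ℝ) (μ γ β : ℝ)
    (hμ : 0 < μ) (hβ0 : 0 < β) (hβ2 : β < 2)
    (φ : Fin q → ℝ) :
    let N := max μ (∑ j, φ j ^ 2)
    let lam := (∑ j, φ j ^ 2) / N
    let a := γ * (2 * (1 - γ * lam) * (1 - γ * β * lam) ^ 2 + γ * β ^ 2 * lam)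
    let b := γ * (2 * β * (1 - γ * lam) * (1 - γ * β * lam) - β
      + 2 * (1 - β) * (1 - γ * β * lam))
    let c := β * (2 * γ * β * (1 - γ * lam) + 2 - β + 4 * γ * (1 - β))
    let ε := (Θhat - Θstar).mulVec φ
    let Θbar := Θhat - (γ * β / N) • Matrix.vecMulVec ε φ
    let Θhat' := Θbar - β • (Θbar - Ξhat)
    let Ξhat' := Ξhat - (γ / N) • Matrix.vecMulVec ((Θhat' - Θhat).mulVec φ + ε) φ
    0 < c →
      ((∑ i, ∑ j, (Ξhat' - Θstar) i j ^ 2) + ∑ i, ∑ j, (Θhat' - Ξhat') i j ^ 2)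
          - ((∑ i, ∑ j, (Ξhat - Θstar) i j ^ 2) + ∑ i, ∑ j, (Θhat - Ξhat) i j ^ 2)
        ≤ -(a - b ^ 2 / c) * ((∑ i, ε i ^ 2) / N) := by
  intro N lam a b c ε Θbar Θhat' Ξhat' hc
  have hN : 0 < N := lt_of_lt_of_le hμ (le_max_left _ _)
  have hφ : φ ⬝ᵥ φ = lam * N := by
    simp only [lam, dotProduct, ← sq]; field_simp
  have hlam0 : 0 ≤ lam := div_nonneg (by positivity) hN.le
  have hlam1 : lam ≤ 1 := (div_le_one hN).2 (le_max_right _ _)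
  have hself (x : Fin m → ℝ) : 0 ≤ x ⬝ᵥ x := Fintype.sum_nonneg fun i => mul_self_nonneg (x i)
  set v := (Θhat - Ξhat) *ᵥ φ
  calc _ = -(β * (2 - β)) * ∑ i, ∑ j, (Θhat - Ξhat) i j ^ 2
        + γ * decrementForm γ β lam (ε ⬝ᵥ ε) (ε ⬝ᵥ v) (v ⬝ᵥ v) / N :=
        lyapunov_difference_eq Θstar Θhat Ξhat φ γ β N lam hN.ne' hφ
    _ ≤ -(a - b ^ 2 / c) * ((ε ⬝ᵥ ε) / N) :=
        lyapunov_difference_le hβ0 hβ2 hN hlam0 hlam1 hc (hself ε) (hself v)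
          (by positivity) (dotProduct_sq_le ε v) (hφ ▸ mulVec_dotProduct_self_le _ φ)
    _ = _ := by simp only [dotProduct, sq]

/-- refined one-step Lyapunov decrease for the high-order tuner
    in terms of the polynomials a, b, c of (γ, β, λ), assuming c(γ,β,λ) > 0. -/
theorem hot_one_step_refined_decrease {m q : ℕ}
    (Θstar Θhat Ξhat : Matrix (Fin m) (Fin q) ℝ) (μ γ β : ℝ)
    (hμ : 0 < μ) (hβ0 : 0 < β) (hβ2 : β < 2) (hγ0 : 0 < γ)
    (φ : Fin q → ℝ) :
    let N := max μ (∑ j, φ j ^ 2)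
    let lam := (∑ j, φ j ^ 2) / N
    let a := γ * (2 * (1 - γ * lam) * (1 - γ * β * lam) ^ 2 + γ * β ^ 2 * lam)
    let b := γ * (2 * β * (1 - γ * lam) * (1 - γ * β * lam) - β
      + 2 * (1 - β) * (1 - γ * β * lam))
    let c := β * (2 * γ * β * (1 - γ * lam) + 2 - β + 4 * γ * (1 - β))
    let ε := (Θhat - Θstar).mulVec φ
    let Θbar := Θhat - (γ * β / N) • Matrix.vecMulVec ε φ
    let Θhat' := Θbar - β • (Θbar - Ξhat)
    let Ξhat' := Ξhat - (γ / N) • Matrix.vecMulVec ((Θhat' - Θhat).mulVec φ + ε) φ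
    0 < c →
      ((∑ i, ∑ j, (Ξhat' - Θstar) i j ^ 2) + ∑ i, ∑ j, (Θhat' - Ξhat') i j ^ 2)
          - ((∑ i, ∑ j, (Ξhat - Θstar) i j ^ 2) + ∑ i, ∑ j, (Θhat - Ξhat) i j ^ 2)
        ≤ -(a - b ^ 2 / c) * ((∑ i, ε i ^ 2) / N) :=
  hot_one_step_refined_decrease_general Θstar Θhat Ξhat μ γ β hμ hβ0 hβ2 φ
end

section
/- Fix Θ_* ∈ ℝ^{m×q}, μ > 0, 0 < β < 2, 0 < γ < √((2−β)/β), and suppose α := 2(1−γ) − γ(2−3β)²/(β(2−(1+γ²)β)) > 0. Let Θ̂, Ξ̂ ∈ ℝ^{m×q} and φ ∈ ℝ^q, set N = max{μ, ‖φ‖²}, ε = (Θ̂ − Θ_*)φ, and perform one high-order tuner step: Θ̄ = Θ̂ − (γβ/N) ε φ^⊤, Θ̂' = Θ̄ − β(Θ̄ − Ξ̂), Ξ̂' = Ξ̂ − (γ/N)((Θ̂' − Θ̂)φ + ε)φ^⊤. Then with V = ‖Ξ̂ − Θ_*‖_F² + ‖Θ̂ − Ξ̂‖_F² and V' = ‖Ξ̂'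 − Θ_*‖_F² + ‖Θ̂' − Ξ̂'‖_F², one has V' − V ≤ −(γα/N)‖(Θ̂' − Θ_*)φ‖² − (2γβ²/N)‖(Θ̄ − Ξ̂)φ‖². -/
/-!
Work row by row and write `g = γ / N`, `s = ‖φ‖²`, `a = ε`, `c = (Θ̂' - Θ_*)φ`,
`e = (Θ̄ - Ξ̂)φ`. The update gives `a = c + β e + g β s a`; using it to trade `-2gβ a e`
for `-2gβ c e - 2gβ² e²`, the change of `V` becomes
`-β(2-β)‖Θ̄ - Ξ̂‖² - 2g(1 - g s) c² + 2g(2-3β) c e - 2gβ² e² + g²β² s (e² - (a+e)²)`.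
Now `g s ≤ γ`, Cauchy–Schwarz `e² ≤ ‖Θ̄ - Ξ̂‖² s`, and Young's inequality on the cross term
with weight `γ / (β(2 - (1+γ²)β))` absorb everything except `-gα c² - 2gβ² e²`.
-/

open scoped RealInnerProductSpace Matrix

theorem norm_add_smul_sq {E : Type*} [NormedAddCommGroup E] [InnerProductSpace ℝ E]
    (u φ : E) (r : ℝ) : ‖u + r • φ‖ ^ 2 = ‖u‖ ^ 2 + 2 * r * ⟪u, φ⟫ + r ^ 2 * ‖φ‖ ^ 2 := by
  rw [norm_add_sq_real, real_inner_smul_right, norm_smul, mul_pow, Real.norm_eq_abs, sq_abs]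
  ring

namespace HighOrderTuner

/- `W = ‖Θ̄ - Ξ̂‖²`, `s = ‖φ‖²`, `b = (Ξ̂ - Θ_*)φ`, and `a, c, e, g` as above; the left side is
`V' - V` for one row after expanding the three squared norms. -/
theorem scalar_lyapunov_change_le {β γ g s W a b c e : ℝ} (hγ : 0 < γ)
    (hE : 0 < β * (2 - (1 + γ ^ 2) * β)) (hg : 0 ≤ g) (hs : 0 ≤ s) (hgs : g * s ≤ γ)
    (hW : 0 ≤ W) (heW : e ^ 2 ≤ W * s)
    (hc : c = (1 - β) * e + b) (ha : a = e + g * β * s * a + b) :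
    (-2 * g * c * b + g ^ 2 * c ^ 2 * s)
        + ((1 - β) ^ 2 * W + 2 * (1 - β) * g * c * e + g ^ 2 * c ^ 2 * s)
        - (W + 2 * g * β * a * e + g ^ 2 * β ^ 2 * a ^ 2 * s)
      ≤ -g * (2 * (1 - γ) - γ * (2 - 3 * β) ^ 2 / (β * (2 - (1 + γ ^ 2) * β))) * c ^ 2
        - 2 * g * β ^ 2 * e ^ 2 := by
  set E := β * (2 - (1 + γ ^ 2) * β) with hE_def
  have hexpand : (-2 * g * c * b + g ^ 2 * c ^ 2 * s)
        + ((1 - β) ^ 2 * W + 2 * (1 - β) * g * c * e + g ^ 2 * c ^ 2 * s)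
        - (W + 2 * g * β * a * e + g ^ 2 * β ^ 2 * a ^ 2 * s)
      = -β * (2 - β) * W - 2 * g * c ^ 2 + 2 * g * (g * s) * c ^ 2
        + 2 * g * ((2 - 3 * β) * c * e) - 2 * g * β ^ 2 * e ^ 2
        - g ^ 2 * β ^ 2 * s * (a + e) ^ 2 + g * β ^ 2 * (g * s) * e ^ 2 := by
    subst hc; linear_combination (-2 * g * β * e) * ha
  have hc2 : g * (g * s) * c ^ 2 ≤ g * γ * c ^ 2 := by gcongr
  have he2 : g * β ^ 2 * (g * s) * e ^ 2 ≤ g * β ^ 2 * γ * e ^ 2 := by gcongr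
  have hae : 0 ≤ g ^ 2 * β ^ 2 * s * (a + e) ^ 2 := by positivity
  have young : 2 * ((2 - 3 * β) * c * e) ≤ γ * (2 - 3 * β) ^ 2 / E * c ^ 2 + E / γ * e ^ 2 := by
    have hsq : γ * (2 - 3 * β) ^ 2 / E * c ^ 2 + E / γ * e ^ 2 - 2 * ((2 - 3 * β) * c * e)
        = (γ * (2 - 3 * β) * c - E * e) ^ 2 / (γ * E) := by
      field_simp; ring
    have : 0 ≤ (γ * (2 - 3 * β) * c - E * e) ^ 2 / (γ * E) := by positivity
    linarith
  have hWe : g * (β * (2 - β)) / γ * e ^ 2 ≤ β * (2 - β) * W := by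
    have hP : 0 ≤ β * (2 - β) := by nlinarith [sq_nonneg (γ * β)]
    rw [div_mul_eq_mul_div, div_le_iff₀ hγ]
    calc g * (β * (2 - β)) * e ^ 2 ≤ g * (β * (2 - β)) * (W * s) := by gcongr
      _ = β * (2 - β) * W * (g * s) := by ring
      _ ≤ β * (2 - β) * W * γ := by gcongr
  have hsplit :
      g * (E / γ) * e ^ 2 + g * β ^ 2 * γ * e ^ 2 = g * (β * (2 - β)) / γ * e ^ 2 := by
    rw [hE_def]; field_simp; ring
  have hgyoung := mul_le_mul_of_nonneg_left young hg
  rw [hexpand]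
  linarith

theorem row_lyapunov_change_le {E : Type*} [NormedAddCommGroup E] [InnerProductSpace ℝ E]
    {x y t φ xbar x' y' : E} {g β γ : ℝ} (hγ : 0 < γ)
    (hE : 0 < β * (2 - (1 + γ ^ 2) * β)) (hg : 0 ≤ g) (hgφ : g * ‖φ‖ ^ 2 ≤ γ)
    (hxbar : xbar = x - (g * β * ⟪x - t, φ⟫) • φ) (hx' : x' = xbar - β • (xbar - y))
    (hy' : y' = y - (g * ⟪x' - t, φ⟫) • φ) :
    (‖y' - t‖ ^ 2 + ‖x' - y'‖ ^ 2) - (‖y - t‖ ^ 2 + ‖x - y‖ ^ 2)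
      ≤ -g * (2 * (1 - γ) - γ * (2 - 3 * β) ^ 2 / (β * (2 - (1 + γ ^ 2) * β))) * ⟪x' - t, φ⟫ ^ 2
        - 2 * g * β ^ 2 * ⟪xbar - y, φ⟫ ^ 2 := by
  set a := ⟪x - t, φ⟫
  set c := ⟪x' - t, φ⟫
  have hy't : y' - t = (y - t) + (-(g * c)) • φ := by rw [hy']; module
  have hx'y' : x' - y' = (1 - β) • (xbar - y) + (g * c) • φ := by rw [hy', hx']; module
  have hxy : x - y = (xbar - y) + (g * β * a) • φ := by rw [hxbar]; module
  have hc : ⟪x' - t, φ⟫ = (1 - β) * ⟪xbar - y, φ⟫ + ⟪y - t, φ⟫ := by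
    rw [show x' - t = (1 - β) • (xbar - y) + (y - t) by rw [hx']; module, inner_add_left,
      real_inner_smul_left]
  have ha : ⟪x - t, φ⟫ = ⟪xbar - y, φ⟫ + g * β * ‖φ‖ ^ 2 * a + ⟪y - t, φ⟫ := by
    rw [show x - t = (xbar - y) + (g * β * a) • φ + (y - t) by rw [← hxy]; module,
      inner_add_left, inner_add_left, real_inner_smul_left, real_inner_self_eq_norm_sq]
    ring
  have hCS : ⟪xbar - y, φ⟫ ^ 2 ≤ ‖xbar - y‖ ^ 2 * ‖φ‖ ^ 2 := by
    rw [← mul_pow]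
    exact sq_le_sq' (neg_le_of_abs_le (abs_real_inner_le_norm _ _)) (real_inner_le_norm _ _)
  rw [hy't, hx'y', hxy, norm_add_smul_sq, norm_add_smul_sq, norm_add_smul_sq, norm_smul,
    real_inner_smul_left, mul_pow, Real.norm_eq_abs, sq_abs]
  have := scalar_lyapunov_change_le hγ hE hg (by positivity) hgφ (by positivity) hCS hc ha
  linear_combination this

end HighOrderTuner

theorem Matrix.inner_toLp_sub_toLp {m n : Type*} [Fintype n] (A B : Matrix m n ℝ) (v : n → ℝ)
    (i : m) :
    ⟪(WithLp.toLp 2 (A i) - WithLp.toLp 2 (B i) : EuclideanSpace ℝ n), WithLp.toLp 2 v⟫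
      = ((A - B) *ᵥ v) i := by
  rw [← WithLp.toLp_sub, EuclideanSpace.inner_toLp_toLp, star_trivial, dotProduct_comm]; rfl

theorem Matrix.norm_toLp_sub_toLp_sq {m n : Type*} [Fintype n] (A B : Matrix m n ℝ) (i : m) :
    ‖(WithLp.toLp 2 (A i) - WithLp.toLp 2 (B i) : EuclideanSpace ℝ n)‖ ^ 2
      = ∑ j, (A - B) i j ^ 2 := by
  rw [← WithLp.toLp_sub, EuclideanSpace.real_norm_sq_eq]; rfl

open HighOrderTuner in
theorem hot_one_step_a_posteriori_decrease_general {m q : ℕ}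
    (Θstar Θhat Ξhat : Matrix (Fin m) (Fin q) ℝ) (μ γ β : ℝ)
    (hβ0 : 0 < β)
    (hγ0 : 0 < γ) (hγ : γ < Real.sqrt ((2 - β) / β))
    (φ : Fin q → ℝ) :
    let α := 2 * (1 - γ) - γ * (2 - 3 * β) ^ 2 / (β * (2 - (1 + γ ^ 2) * β))
    let N := max μ (∑ j, φ j ^ 2)
    let ε := (Θhat - Θstar).mulVec φ
    let Θbar := Θhat - (γ * β / N) • Matrix.vecMulVec ε φ
    let Θhat' := Θbar - β • (Θbar - Ξhat)
    let Ξhat' := Ξhat - (γ / N) • Matrix.vecMulVec ((Θhat' - Θhat).mulVec φ + ε) φ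
    ((∑ i, ∑ j, (Ξhat' - Θstar) i j ^ 2) + ∑ i, ∑ j, (Θhat' - Ξhat') i j ^ 2)
        - ((∑ i, ∑ j, (Ξhat - Θstar) i j ^ 2) + ∑ i, ∑ j, (Θhat - Ξhat) i j ^ 2)
      ≤ -(γ * α / N) * (∑ i, ((Θhat' - Θstar).mulVec φ) i ^ 2)
        - (2 * γ * β ^ 2 / N) * (∑ i, ((Θbar - Ξhat).mulVec φ) i ^ 2) := by
  intro α N ε Θbar Θhat' Ξhat'
  have hE : 0 < β * (2 - (1 + γ ^ 2) * β) := by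
    have := (lt_div_iff₀ hβ0).1 ((Real.lt_sqrt hγ0.le).1 hγ)
    exact mul_pos hβ0 (by linarith)
  have hsN : ∑ j, φ j ^ 2 ≤ N := le_max_right _ _
  have hN : 0 ≤ N := (Finset.sum_nonneg fun j _ => sq_nonneg (φ j)).trans hsN
  have hgφ : γ / N * ‖(WithLp.toLp 2 φ : EuclideanSpace ℝ (Fin q))‖ ^ 2 ≤ γ := by
    rw [EuclideanSpace.real_norm_sq_eq]
    exact (div_mul_eq_mul_div γ N _).trans_le <| div_le_of_le_mul₀ hN hγ0.le <| by gcongr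
  have hapost : (Θhat' - Θhat).mulVec φ + ε = (Θhat' - Θstar).mulVec φ := by
    rw [show ε = (Θhat - Θstar) *ᵥ φ from rfl, ← Matrix.add_mulVec, sub_add_sub_cancel]
  have row (i : Fin m) :
      (∑ j, (Ξhat' - Θstar) i j ^ 2 + ∑ j, (Θhat' - Ξhat') i j ^ 2)
          - (∑ j, (Ξhat - Θstar) i j ^ 2 + ∑ j, (Θhat - Ξhat) i j ^ 2)
        ≤ -(γ * α / N) * ((Θhat' - Θstar).mulVec φ) i ^ 2
          - (2 * γ * β ^ 2 / N) * ((Θbar - Ξhat).mulVec φ) i ^ 2 := by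
    have hrow := row_lyapunov_change_le (x := WithLp.toLp 2 (Θhat i)) (y := WithLp.toLp 2 (Ξhat i))
      (t := WithLp.toLp 2 (Θstar i)) (xbar := WithLp.toLp 2 (Θbar i))
      (x' := WithLp.toLp 2 (Θhat' i)) (y' := WithLp.toLp 2 (Ξhat' i))
      hγ0 hE (div_nonneg hγ0.le hN) hgφ
      (by rw [Matrix.inner_toLp_sub_toLp]; ext j; simp [Θbar, ε, Matrix.vecMulVec_apply]; ring)
      (by ext j; simp [Θhat'])
      (by
        rw [Matrix.inner_toLp_sub_toLp, ← hapost]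
        ext j; simp [Ξhat', Matrix.vecMulVec_apply]; ring)
    simp only [Matrix.inner_toLp_sub_toLp, Matrix.norm_toLp_sub_toLp_sq] at hrow
    refine hrow.trans_eq ?_
    simp only [α]
    ring
  have hsum := Finset.sum_le_sum fun i (_ : i ∈ Finset.univ) => row i
  rwa [Finset.sum_sub_distrib, Finset.sum_add_distrib, Finset.sum_add_distrib,
    Finset.sum_sub_distrib, ← Finset.mul_sum, ← Finset.mul_sum] at hsum

/-- one-step Lyapunov decrease for the high-order tuner in terms
    of the a-posteriori error (Θ̂' − Θ_*)φ and (Θ̄ − Ξ̂)φ. -/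
theorem hot_one_step_a_posteriori_decrease {m q : ℕ}
    (Θstar Θhat Ξhat : Matrix (Fin m) (Fin q) ℝ) (μ γ β : ℝ)
    (hμ : 0 < μ) (hβ0 : 0 < β) (hβ2 : β < 2)
    (hγ0 : 0 < γ) (hγ : γ < Real.sqrt ((2 - β) / β))
    (hα : 0 < 2 * (1 - γ) - γ * (2 - 3 * β) ^ 2 / (β * (2 - (1 + γ ^ 2) * β)))
    (φ : Fin q → ℝ) :
    let α := 2 * (1 - γ) - γ * (2 - 3 * β) ^ 2 / (β * (2 - (1 + γ ^ 2) * β))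
    let N := max μ (∑ j, φ j ^ 2)
    let ε := (Θhat - Θstar).mulVec φ
    let Θbar := Θhat - (γ * β / N) • Matrix.vecMulVec ε φ
    let Θhat' := Θbar - β • (Θbar - Ξhat)
    let Ξhat' := Ξhat - (γ / N) • Matrix.vecMulVec ((Θhat' - Θhat).mulVec φ + ε) φ
    ((∑ i, ∑ j, (Ξhat' - Θstar) i j ^ 2) + ∑ i, ∑ j, (Θhat' - Ξhat') i j ^ 2)
        - ((∑ i, ∑ j, (Ξhat - Θstar) i j ^ 2) + ∑ i, ∑ j, (Θhat - Ξhat) i j ^ 2)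
      ≤ -(γ * α / N) * (∑ i, ((Θhat' - Θstar).mulVec φ) i ^ 2)
        - (2 * γ * β ^ 2 / N) * (∑ i, ((Θbar - Ξhat).mulVec φ) i ^ 2) :=
  hot_one_step_a_posteriori_decrease_general Θstar Θhat Ξhat μ γ β hβ0 hγ0 hγ φ
end
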